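/- arXiv:1201.4057 — 11 statements merged into one kernel-verified Lean document; each statement's English description precedes it below -/
import Mathlib

section
/- For every coin sequence ε : ℕ → {-1,+1}, the set {n ∈ ℕ : ℓ_n^- = ℓ_n^+} of equality times of the self-repelling walk is infinite, and for every k ∈ ℕ one has 2k = N(k) + H_{N(k)}. -/
open MeasureTheory Filter

/-- Initial local time: edge `i` denotes the half-integer edge `i + 1/2`
joining `i` and `i+1`; `aInit i = a(i + 1/2)`, which is `0` if `|i+1/2| - 1/2`
is even and `-1` if it is odd. -/
def aInit (i : ℤ) : ℤ := if Even (if 0 ≤ i then i else -i - 1) then 0 else -1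

/-- State of the self-repelling walk: current position, edge local times
(`loc i` is the local time of the edge joining `i` and `i+1`, i.e. of the
half-integer edge `i + 1/2`), and the number of coins used so far. -/
structure SRWState where
  pos : ℤ
  loc : ℤ → ℤ
  coins : ℕ

/-- One step of the self-repelling walk driven by the coin sequence `ε`. -/
def srwStep (ε : ℕ → ℤ) (s : SRWState) : SRWState :=
  let lm := s.loc (s.pos - 1)   -- ℓ_n⁻ = ℓ_n(X_n - 1/2)
  let lp := s.loc s.pos         -- ℓ_n⁺ = ℓ_n(X_n + 1/2)
  let next : ℤ := if lp < lm then s.pos + 1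
    else if lm < lp then s.pos - 1
    else s.pos + ε s.coins
  { pos := next
    loc := fun i => if i = min s.pos next then s.loc i + 1 else s.loc i
    coins := if lm = lp then s.coins + 1 else s.coins }

/-- The self-repelling walk: state after `n` steps. -/
def srw (ε : ℕ → ℤ) : ℕ → SRWState
  | 0 => ⟨0, aInit, 0⟩
  | n + 1 => srwStep ε (srw ε n)

/-- Position `X_n` of the self-repelling walk. -/
def Xwalk (ε : ℕ → ℤ) (n : ℕ) : ℤ := (srw ε n).pos

/-- Edge local time `ℓ_n(i + 1/2)`. -/
def ellEdge (ε : ℕ → ℤ) (n : ℕ) (i : ℤ) : ℤ := (srw ε n).loc i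

/-- `ℓ_n⁻ = ℓ_n(X_n - 1/2)`. -/
def ellMinus (ε : ℕ → ℤ) (n : ℕ) : ℤ := ellEdge ε n (Xwalk ε n - 1)

/-- `ℓ_n⁺ = ℓ_n(X_n + 1/2)`. -/
def ellPlus (ε : ℕ → ℤ) (n : ℕ) : ℤ := ellEdge ε n (Xwalk ε n)

/-- `n` is an equality time: `ℓ_n⁻ = ℓ_n⁺`. -/
def IsEqTime (ε : ℕ → ℤ) (n : ℕ) : Prop := ellMinus ε n = ellPlus ε n

/-- `N(k)`: the `(k+1)`-st smallest equality time. -/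
noncomputable def timeN (ε : ℕ → ℤ) (k : ℕ) : ℕ := Nat.nth (IsEqTime ε) k

/-- `H_n = (ℓ_n⁻ + ℓ_n⁺)/2`. -/
def Hheight (ε : ℕ → ℤ) (n : ℕ) : ℤ := (ellMinus ε n + ellPlus ε n) / 2

/-- `ã(x)`: `0` for even `x`, `-1` for odd `x`. -/
def aTilde (x : ℤ) : ℤ := if Even x then 0 else -1

/-- Modified local time `ℓ~_n(x)`: equals `ℓ_n(x - 1/2)` for `x ≤ X_n` and
`ℓ_n(x + 1/2)` for `x > X_n`. -/
def modLoc (ε : ℕ → ℤ) (n : ℕ) (x : ℤ) : ℤ :=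
  if x ≤ Xwalk ε n then ellEdge ε n (x - 1) else ellEdge ε n x

/-- Area `𝒜(f) = Σ_x (f(x) - ã(x))` between `f` and `ã`. -/
noncomputable def areaA (f : ℤ → ℤ) : ℤ := ∑ᶠ x : ℤ, (f x - aTilde x)

/-- `m₋(f) = 1 + max {x ≤ 0 : f x = -1}`. -/
noncomputable def mMinus (f : ℤ → ℤ) : ℤ := 1 + sSup {x : ℤ | x ≤ 0 ∧ f x = -1}

/-- `m₊(f) = -1 + min {x ≥ 0 : f x = -1}`. -/
noncomputable def mPlus (f : ℤ → ℤ) : ℤ := -1 + sInf {x : ℤ | 0 ≤ x ∧ f x = -1}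

/-- `O(f)`: the number of zeros of `f` strictly between `m₋(f)` and `m₊(f)`. -/
noncomputable def nZeros (f : ℤ → ℤ) : ℕ :=
  {x : ℤ | mMinus f < x ∧ x < mPlus f ∧ f x = 0}.ncard

/-- `o₊ = max {x < m₊(f) : f x = 0}`. -/
noncomputable def oPlus (f : ℤ → ℤ) : ℤ := sSup {x : ℤ | x < mPlus f ∧ f x = 0}

/-- `o₋ = min {x > m₋(f) : f x = 0}`. -/
noncomputable def oMinus (f : ℤ → ℤ) : ℤ := sInf {x : ℤ | mMinus f < x ∧ f x = 0}

open Classical in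
/-- The admissible interval `I(f)`. -/
noncomputable def interI (f : ℤ → ℤ) : Set ℤ :=
  if f = aTilde then {0}
  else if nZeros f = 0 then Set.Icc (mMinus f) (mPlus f)
  else if 0 < oPlus f then Set.Ioc (oPlus f) (mPlus f)
  else Set.Ico (mMinus f) (oMinus f)

/-- Coins as `±1`-valued integers from booleans. -/
def coin (ω : ℕ → Bool) (j : ℕ) : ℤ := if ω j then 1 else -1

/-!
Call a local-time profile *regular* if neighbouring edges differ by exactly one, except the
two edges around the walker, which differ by `0` or `2`. The initial profile `a` is regular,
and a step preserves regularity: the walker crosses the lower of its two edges (or either one,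
by a coin, when they are equal), and raising that edge by one turns it into an ordinary edge,
while the new gap is `0` or `2` because the next edge differs from the crossed one by one.
Following the larger of the two local times at the walker, `M_n = max(ℓ_n⁻, ℓ_n⁺)`, each step
changes it by `+1` at an equality time and by `-1` otherwise, so `n + M_n = 2 j_n`. At an
equality time `H_n = M_n`, and `j_{N(k)} = k` gives `2k = N(k) + H_{N(k)}`. Since local times
never drop below `-1`, `j_n ≥ (n - 1) / 2` grows without bound: there are infinitely many
equality times.
-/

lemma neg_one_le_aInit (i : ℤ) : -1 ≤ aInit i := by
  unfold aInit; split <;> omega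

lemma aInit_succ (i : ℤ) (hi : i ≠ -1) :
    aInit (i + 1) = aInit i + 1 ∨ aInit (i + 1) = aInit i - 1 := by
  unfold aInit
  simp only [Int.even_iff]
  split_ifs <;> omega

namespace SRWState

structure Regular (s : SRWState) : Prop where
  loc_succ : ∀ i, i ≠ s.pos - 1 → s.loc (i + 1) = s.loc i + 1 ∨ s.loc (i + 1) = s.loc i - 1
  loc_gap : s.loc (s.pos - 1) = s.loc s.pos ∨ s.loc (s.pos - 1) = s.loc s.pos + 2 ∨
    s.loc s.pos = s.loc (s.pos - 1) + 2

def maxLoc (s : SRWState) : ℤ := max (s.loc (s.pos - 1)) (s.loc s.pos)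

end SRWState

open SRWState

lemma regular_init : Regular ⟨0, aInit, 0⟩ where
  loc_succ i hi := aInit_succ i hi
  loc_gap := by decide

section Step

variable {ε : ℕ → ℤ} {s : SRWState}

lemma srwStep_pos_eq_add_one_or_sub_one (hε : ∀ j, ε j = 1 ∨ ε j = -1) :
    (srwStep ε s).pos = s.pos + 1 ∨ (srwStep ε s).pos = s.pos - 1 := by
  simp only [srwStep]
  split_ifs
  · exact .inl rfl
  · exact .inr rfl
  · rcases hε s.coins with h | h <;> rw [h] <;> omega

lemma loc_pos_le_of_srwStep_pos_eq_add_one (hp : (srwStep ε s).pos = s.pos + 1) :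
    s.loc s.pos ≤ s.loc (s.pos - 1) := by
  by_contra! h
  simp only [srwStep, if_neg h.not_gt, if_pos h] at hp
  omega

lemma loc_le_of_srwStep_pos_eq_sub_one (hp : (srwStep ε s).pos = s.pos - 1) :
    s.loc (s.pos - 1) ≤ s.loc s.pos := by
  by_contra! h
  simp only [srwStep, if_pos h] at hp
  omega

lemma srwStep_loc_of_pos_eq_add_one (hp : (srwStep ε s).pos = s.pos + 1) (i : ℤ) :
    (srwStep ε s).loc i = if i = s.pos then s.loc i + 1 else s.loc i := by
  have hmin : min s.pos (srwStep ε s).pos = s.pos := by omega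
  exact hmin ▸ rfl

lemma srwStep_loc_of_pos_eq_sub_one (hp : (srwStep ε s).pos = s.pos - 1) (i : ℤ) :
    (srwStep ε s).loc i = if i = s.pos - 1 then s.loc i + 1 else s.loc i := by
  have hmin : min s.pos (srwStep ε s).pos = s.pos - 1 := by omega
  exact hmin ▸ rfl

lemma srwStep_coins_cast : ((srwStep ε s).coins : ℤ) =
    s.coins + if s.loc (s.pos - 1) = s.loc s.pos then 1 else 0 := by
  simp only [srwStep]
  split_ifs <;> simp

lemma regular_srwStep (hε : ∀ j, ε j = 1 ∨ ε j = -1) (hs : s.Regular) :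
    (srwStep ε s).Regular := by
  obtain ⟨hsucc, hgap⟩ := hs
  rcases srwStep_pos_eq_add_one_or_sub_one (s := s) hε with hp | hp
  · have hle := loc_pos_le_of_srwStep_pos_eq_add_one hp
    have hloc := srwStep_loc_of_pos_eq_add_one hp
    have hnext := hsucc s.pos (by omega)
    refine ⟨fun i hi => ?_, ?_⟩
    · rcases eq_or_ne i (s.pos - 1) with rfl | hi'
      · rw [hloc, hloc, sub_add_cancel, if_pos rfl, if_neg (by omega)]
        omega
      · rw [hloc, hloc, if_neg (by omega), if_neg (by omega)]
        exact hsucc i hi'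
    · rw [hp, add_sub_cancel_right, hloc, hloc, if_pos rfl, if_neg (by omega)]
      omega
  · have hle := loc_le_of_srwStep_pos_eq_sub_one hp
    have hloc := srwStep_loc_of_pos_eq_sub_one hp
    have hprev := hsucc (s.pos - 2) (by omega)
    rw [show s.pos - 2 + 1 = s.pos - 1 by ring] at hprev
    refine ⟨fun i hi => ?_, ?_⟩
    · rcases eq_or_ne i (s.pos - 1) with rfl | hi'
      · rw [hloc, hloc, sub_add_cancel, if_pos rfl, if_neg (by omega)]
        omega
      · rw [hloc, hloc, if_neg hi', if_neg (by omega)]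
        exact hsucc i hi'
    · rw [hp, show s.pos - 1 - 1 = s.pos - 2 by ring, hloc, hloc, if_pos rfl, if_neg (by omega)]
      omega

lemma maxLoc_srwStep (hε : ∀ j, ε j = 1 ∨ ε j = -1) (hs : s.Regular) :
    (srwStep ε s).maxLoc + 1 + 2 * s.coins = s.maxLoc + 2 * (srwStep ε s).coins := by
  obtain ⟨hsucc, hgap⟩ := hs
  simp only [maxLoc, srwStep_coins_cast]
  rcases srwStep_pos_eq_add_one_or_sub_one (s := s) hε with hp | hp
  · have hle := loc_pos_le_of_srwStep_pos_eq_add_one hp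
    have hloc := srwStep_loc_of_pos_eq_add_one hp
    have hnext := hsucc s.pos (by omega)
    rw [hp, add_sub_cancel_right, hloc, hloc, if_pos rfl, if_neg (by omega)]
    split_ifs <;> omega
  · have hle := loc_le_of_srwStep_pos_eq_sub_one hp
    have hloc := srwStep_loc_of_pos_eq_sub_one hp
    have hprev := hsucc (s.pos - 2) (by omega)
    rw [show s.pos - 2 + 1 = s.pos - 1 by ring] at hprev
    rw [hp, show s.pos - 1 - 1 = s.pos - 2 by ring, hloc, hloc, if_pos rfl, if_neg (by omega)]
    split_ifs <;> omega

end Step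

section Walk

variable (ε : ℕ → ℤ)

instance : DecidablePred (IsEqTime ε) := fun _ => Int.decEq _ _

lemma srw_succ (n : ℕ) : srw ε (n + 1) = srwStep ε (srw ε n) := rfl

lemma regular_srw (hε : ∀ j, ε j = 1 ∨ ε j = -1) (n : ℕ) : (srw ε n).Regular := by
  induction n with
  | zero => exact regular_init
  | succ n ih => exact regular_srwStep hε ih

lemma neg_one_le_srw_loc (n : ℕ) (i : ℤ) : -1 ≤ (srw ε n).loc i := by
  induction n with
  | zero => exact neg_one_le_aInit i
  | succ n ih =>
    rw [srw_succ]
    simp only [srwStep]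
    split_ifs <;> omega

lemma srw_coins_eq_count (n : ℕ) : (srw ε n).coins = Nat.count (IsEqTime ε) n := by
  induction n with
  | zero => rfl
  | succ n ih =>
    rw [srw_succ, Nat.count_succ, ← ih]
    show (if IsEqTime ε n then _ else _) = _
    split_ifs <;> rfl

lemma add_maxLoc_srw (hε : ∀ j, ε j = 1 ∨ ε j = -1) (n : ℕ) :
    n + (srw ε n).maxLoc = 2 * Nat.count (IsEqTime ε) n := by
  induction n with
  | zero => simp [maxLoc, srw, aInit]
  | succ n ih =>
    have h := maxLoc_srwStep hε (regular_srw ε hε n)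
    rw [← srw_succ, srw_coins_eq_count, srw_coins_eq_count] at h
    push_cast
    omega

lemma infinite_setOf_isEqTime (hε : ∀ j, ε j = 1 ∨ ε j = -1) :
    {n | IsEqTime ε n}.Infinite := by
  intro hfin
  set c := hfin.toFinset.card
  have hcount := Nat.count_le_card (p := IsEqTime ε) hfin (2 * c + 2)
  have hsum := add_maxLoc_srw ε hε (2 * c + 2)
  have hmax : -1 ≤ (srw ε (2 * c + 2)).maxLoc := (neg_one_le_srw_loc ε _ _).trans (le_max_left _ _)
  push_cast at hsum
  omega

lemma maxLoc_srw_eq_hheight {n : ℕ} (hn : IsEqTime ε n) : (srw ε n).maxLoc = Hheight ε n := by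
  simp only [IsEqTime, ellMinus, ellPlus, ellEdge, Xwalk] at hn
  simp only [maxLoc, Hheight, ellMinus, ellPlus, ellEdge, Xwalk, hn, max_self]
  omega

end Walk

/-- For every coin sequence `ε : ℕ → {-1,+1}`, the set of equality
times `{n : ℓ_n⁻ = ℓ_n⁺}` is infinite, and for every `k`, `2k = N(k) + H_{N(k)}`. -/
theorem statement0 (ε : ℕ → ℤ) (hε : ∀ j, ε j = 1 ∨ ε j = -1) :
    {n : ℕ | IsEqTime ε n}.Infinite ∧
      ∀ k : ℕ, (2 * k : ℤ) = (timeN ε k : ℤ) + Hheight ε (timeN ε k) := by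
  have hinf := infinite_setOf_isEqTime ε hε
  refine ⟨hinf, fun k => ?_⟩
  have heq : IsEqTime ε (timeN ε k) := Nat.nth_mem_of_infinite hinf k
  have hcount : Nat.count (IsEqTime ε) (timeN ε k) = k := Nat.count_nth_of_infinite hinf k
  have hsum := add_maxLoc_srw ε hε (timeN ε k)
  rw [maxLoc_srw_eq_hheight ε heq, hcount] at hsum
  exact hsum.symm
end

section
/- Let f : ℤ → ℕ be a function with f(x) = 0 for all but finitely many x and |f(x+1) - f(x)| ≤ 1 for all x ∈ ℤ. Then for every x ∈ ℤ, f(x)² ≤ Σ_{y ∈ ℤ} f(y). -/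
/-!
A function with slopes at most one that takes the value `n` at `x` lies above the tent
`y ↦ n - |y - x|`, and the tent has area `n + 2 ((n - 1) + ⋯ + 1) = n²`.
-/

open Finset

theorem Int.abs_sub_le_of_abs_succ_sub_le {g : ℤ → ℤ} (hg : ∀ y, |g (y + 1) - g y| ≤ 1)
    (a b : ℤ) : |g a - g b| ≤ |a - b| := by
  have step : ∀ (b : ℤ) (m : ℕ), |g (b + m) - g b| ≤ m := by
    intro b m
    induction m with
    | zero => simp
    | succ m ih =>
      calc |g (b + ↑(m + 1)) - g b|
          ≤ |g (b + m + 1) - g (b + m)| + |g (b + m) - g b| := by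
            rw [Nat.cast_succ, ← add_assoc]; exact abs_sub_le _ _ _
        _ ≤ 1 + m := add_le_add (hg _) ih
        _ = ↑(m + 1) := by push_cast; ring
  rcases le_total b a with hba | hab
  · obtain ⟨m, rfl⟩ := Int.exists_add_of_le hba
    simpa using step b m
  · obtain ⟨m, rfl⟩ := Int.exists_add_of_le hab
    simpa [abs_sub_comm] using step a m

theorem Int.sum_Icc_sub_abs_sub (x : ℤ) (n : ℕ) :
    ∑ y ∈ Icc (x - n) (x + n), ((n : ℤ) - |y - x|) = n ^ 2 := by
  induction n with
  | zero => simp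
  | succ n ih =>
    have hIcc : Icc (x - ↑(n + 1)) (x + ↑(n + 1))
        = insert (x - ↑(n + 1)) (insert (x + ↑(n + 1)) (Icc (x - n) (x + n))) := by
      ext y; simp only [mem_insert, mem_Icc]; omega
    have hcard : (#(Icc (x - n) (x + n)) : ℤ) = 2 * n + 1 := by
      rw [Int.card_Icc]; omega
    have hend : ∀ y ∈ ({x - ↑(n + 1), x + ↑(n + 1)} : Finset ℤ), |y - x| = n + 1 := by
      simp only [mem_insert, mem_singleton]
      rintro y (rfl | rfl) <;> rw [abs_eq (by positivity)] <;> omega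
    rw [hIcc, sum_insert (by simp; omega), sum_insert (by simp), hend _ (by simp),
      hend _ (by simp), sum_congr rfl fun y _ =>
        show ((n + 1 : ℕ) : ℤ) - |y - x| = (n - |y - x|) + 1 by push_cast; ring,
      sum_add_distrib, ih, sum_const, nsmul_one, hcard]
    push_cast
    ring

theorem Finset.sum_le_finsum {α M : Type*} [AddCommMonoid M] [PartialOrder M]
    [IsOrderedAddMonoid M] [CanonicallyOrderedAdd M] (f : α → M) (hf : (Function.support f).Finite)
    (s : Finset α) : ∑ y ∈ s, f y ≤ ∑ᶠ y, f y := by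
  classical
  rw [finsum_eq_sum_of_support_subset f (s := s ∪ hf.toFinset) (by simp)]
  exact sum_le_sum_of_subset subset_union_left

/-- if `f : ℤ → ℕ` vanishes outside a finite set and has slopes
at most one in absolute value, then `f(x)² ≤ Σ_y f(y)` for every `x`. -/
theorem statement3 (f : ℤ → ℕ) (hfin : (Function.support f).Finite)
    (hslope : ∀ x : ℤ, |(f (x + 1) : ℤ) - (f x : ℤ)| ≤ 1) (x : ℤ) :
    f x ^ 2 ≤ ∑ᶠ y : ℤ, f y := by
  have above_tent : ∀ y, (f x : ℤ) - |y - x| ≤ f y := fun y => by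
    have := Int.abs_sub_le_of_abs_succ_sub_le (g := fun y => (f y : ℤ)) hslope y x
    rw [abs_le] at this
    linarith
  have above_tent_sum : f x ^ 2 ≤ ∑ y ∈ Icc (x - f x) (x + f x), f y := by
    have : (f x ^ 2 : ℤ) ≤ ∑ y ∈ Icc (x - f x) (x + f x), (f y : ℤ) := by
      rw [← Int.sum_Icc_sub_abs_sub]
      exact sum_le_sum fun y _ => above_tent y
    exact_mod_cast this
  exact above_tent_sum.trans (sum_le_finsum f hfin _)
end

section
/- For every coin sequence ε : ℕ → {-1,+1} and every n ∈ ℕ: |ℓ_n(e) - ℓ_n(e+1)| = 1 for every e ∈ ℤ + 1/2 with e ≠ X_n - 1/2, and ℓ_n(X_n - 1/2) - ℓ_n(X_n + 1/2) ∈ {-2, 0, 2}. -/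
open MeasureTheory Filter

/-!
The two claims together form an invariant of the walk: the local-time profile is a zigzag
(adjacent edges differ by `±1`) except at the walker's vertex, where the two edges differ by
`-2`, `0` or `2`. It holds for the initial profile `a`. A step crosses, and increments, an edge
whose local time is not larger than the other one's, so the old kink becomes a difference of
`±1`, while at the new vertex a former difference of `±1` becomes `0` or `±2`.
-/

def ZigzagAround (f : ℤ → ℤ) (x : ℤ) : Prop :=
  (∀ i : ℤ, i ≠ x - 1 → |f i - f (i + 1)| = 1) ∧
    (f (x - 1) - f x = -2 ∨ f (x - 1) - f x = 0 ∨ f (x - 1) - f x = 2)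

open Function

namespace ZigzagAround

variable {f : ℤ → ℤ} {x : ℤ}

theorem update_right (h : ZigzagAround f x) (hx : f x ≤ f (x - 1)) :
    ZigzagAround (update f x (f x + 1)) (x + 1) := by
  obtain ⟨hflat, hkink⟩ := h
  have hnext := (abs_eq zero_le_one).1 (hflat x (by omega))
  refine ⟨fun i hi => ?_, ?_⟩
  · by_cases hix : i = x - 1
    · subst hix
      rw [update_of_ne (by omega), sub_add_cancel, update_self, abs_eq zero_le_one]
      omega
    · rw [update_of_ne (by omega), update_of_ne (by omega)]
      exact hflat i hix
  · rw [add_sub_cancel_right, update_self, update_of_ne (by omega)]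
    omega

theorem update_left (h : ZigzagAround f x) (hx : f (x - 1) ≤ f x) :
    ZigzagAround (update f (x - 1) (f (x - 1) + 1)) (x - 1) := by
  obtain ⟨hflat, hkink⟩ := h
  have hprev := (abs_eq zero_le_one).1 (hflat (x - 2) (by omega))
  rw [show x - 2 + 1 = x - 1 by ring] at hprev
  refine ⟨fun i hi => ?_, ?_⟩
  · by_cases hix : i = x - 1
    · subst hix
      rw [update_self, sub_add_cancel, update_of_ne (by omega), abs_eq zero_le_one]
      omega
    · rw [update_of_ne hix, update_of_ne (by omega)]
      exact hflat i hix
  · rw [show x - 1 - 1 = x - 2 by ring, update_self, update_of_ne (by omega)]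
    omega

end ZigzagAround

theorem zigzagAround_aInit : ZigzagAround aInit 0 := by
  refine ⟨fun i hi => ?_, by decide⟩
  rw [abs_eq zero_le_one]
  simp only [aInit, Int.even_iff]
  split_ifs <;> omega

section srwStep

variable {ε : ℕ → ℤ} {s : SRWState}

theorem srwStep_of_moves_right
    (h : s.loc s.pos < s.loc (s.pos - 1) ∨ s.loc s.pos = s.loc (s.pos - 1) ∧ ε s.coins = 1) :
    (srwStep ε s).pos = s.pos + 1 ∧
      (srwStep ε s).loc = update s.loc s.pos (s.loc s.pos + 1) := by
  have hpos : (srwStep ε s).pos = s.pos + 1 := by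
    rcases h with h | ⟨h, hε⟩
    · simp [srwStep, h]
    · simp [srwStep, h, hε]
  refine ⟨hpos, funext fun i => ?_⟩
  simp only [srwStep] at hpos ⊢
  rw [hpos, min_eq_left (by omega), update_apply]
  split_ifs with hi <;> simp [hi]

theorem srwStep_of_moves_left
    (h : s.loc (s.pos - 1) < s.loc s.pos ∨ s.loc (s.pos - 1) = s.loc s.pos ∧ ε s.coins = -1) :
    (srwStep ε s).pos = s.pos - 1 ∧
      (srwStep ε s).loc = update s.loc (s.pos - 1) (s.loc (s.pos - 1) + 1) := by
  have hpos : (srwStep ε s).pos = s.pos - 1 := by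
    rcases h with h | ⟨h, hε⟩
    · simp [srwStep, h, h.not_gt]
    · simp [srwStep, h, hε, ← sub_eq_add_neg]
  refine ⟨hpos, funext fun i => ?_⟩
  simp only [srwStep] at hpos ⊢
  rw [hpos, min_eq_right (by omega), update_apply]
  split_ifs with hi <;> simp [hi]

theorem ZigzagAround.srwStep (hε : ε s.coins = 1 ∨ ε s.coins = -1)
    (h : ZigzagAround s.loc s.pos) : ZigzagAround (srwStep ε s).loc (srwStep ε s).pos := by
  have hdir : (s.loc s.pos < s.loc (s.pos - 1) ∨ s.loc s.pos = s.loc (s.pos - 1) ∧ ε s.coins = 1) ∨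
      (s.loc (s.pos - 1) < s.loc s.pos ∨ s.loc (s.pos - 1) = s.loc s.pos ∧ ε s.coins = -1) := by
    omega
  rcases hdir with hright | hleft
  · obtain ⟨hpos, hloc⟩ := srwStep_of_moves_right hright
    rw [hpos, hloc]
    exact h.update_right (by omega)
  · obtain ⟨hpos, hloc⟩ := srwStep_of_moves_left hleft
    rw [hpos, hloc]
    exact h.update_left (by omega)

end srwStep

theorem zigzagAround_srw {ε : ℕ → ℤ} (hε : ∀ j, ε j = 1 ∨ ε j = -1) (n : ℕ) :
    ZigzagAround (srw ε n).loc (srw ε n).pos := by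
  induction n with
  | zero => exact zigzagAround_aInit
  | succ n ih => exact ih.srwStep (hε _)

/-- for every `n`, `|ℓ_n(e) - ℓ_n(e+1)| = 1` for every edge
`e = i + 1/2` with `e ≠ X_n - 1/2`, and `ℓ_n(X_n - 1/2) - ℓ_n(X_n + 1/2) ∈ {-2,0,2}`. -/
theorem statement5 (ε : ℕ → ℤ) (hε : ∀ j, ε j = 1 ∨ ε j = -1) (n : ℕ) :
    (∀ i : ℤ, i ≠ Xwalk ε n - 1 → |ellEdge ε n i - ellEdge ε n (i + 1)| = 1) ∧
      (ellMinus ε n - ellPlus ε n = -2 ∨ ellMinus ε n - ellPlus ε n = 0 ∨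
        ellMinus ε n - ellPlus ε n = 2) :=
  zigzagAround_srw hε n
end

section
/- For every coin sequence ε : ℕ → {-1,+1} and every n ∈ ℕ, the position X_n is the unique integer x such that ℓ_n(x + 1/2) - ℓ_n(x - 1/2) is even; in other words, the walk can be read off from its local time profile. -/
/-!
Initially `a(x + 1/2) - a(x - 1/2)` is odd except at `x = 0`. A step from `p` to `q = p ± 1` adds
one to the local time of the edge between them, which flips the parity of the increments at both
of its endpoints `p` and `q`: the unique even increment moves along with the walk.
-/

open MeasureTheory Filter

lemma aInit_sub_even_iff (x : ℤ) : Even (aInit x - aInit (x - 1)) ↔ x = 0 := by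
  simp only [aInit, Int.even_iff]
  split_ifs <;> omega

lemma even_sub_iff_of_increment_edge {f : ℤ → ℤ} {p q : ℤ}
    (hf : ∀ x, Even (f x - f (x - 1)) ↔ x = p) (hq : q = p + 1 ∨ q = p - 1) (x : ℤ) :
    Even ((if x = min p q then f x + 1 else f x) -
        (if x - 1 = min p q then f (x - 1) + 1 else f (x - 1))) ↔ x = q := by
  have hfx := hf x
  rw [Int.even_iff] at hfx ⊢
  rcases hq with rfl | rfl
  · rw [min_eq_left (by omega)]
    split_ifs <;> omega
  · rw [min_eq_right (by omega)]
    split_ifs <;> omega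

lemma Xwalk_succ_eq_add_one_or_sub_one (ε : ℕ → ℤ) (hε : ∀ j, ε j = 1 ∨ ε j = -1) (n : ℕ) :
    Xwalk ε (n + 1) = Xwalk ε n + 1 ∨ Xwalk ε (n + 1) = Xwalk ε n - 1 := by
  change (srwStep ε (srw ε n)).pos = _ ∨ (srwStep ε (srw ε n)).pos = _
  simp only [srwStep]
  split_ifs
  · exact Or.inl rfl
  · exact Or.inr rfl
  · rcases hε (srw ε n).coins with h | h <;> rw [h]
    · exact Or.inl rfl
    · exact Or.inr (sub_eq_add_neg _ _).symm

lemma ellEdge_succ (ε : ℕ → ℤ) (n : ℕ) (i : ℤ) :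
    ellEdge ε (n + 1) i =
      if i = min (Xwalk ε n) (Xwalk ε (n + 1)) then ellEdge ε n i + 1 else ellEdge ε n i :=
  rfl

/-- `X_n` is the unique integer `x` such that
`ℓ_n(x + 1/2) - ℓ_n(x - 1/2)` is even. -/
theorem statement6 (ε : ℕ → ℤ) (hε : ∀ j, ε j = 1 ∨ ε j = -1) (n : ℕ) :
    ∀ x : ℤ, Even (ellEdge ε n x - ellEdge ε n (x - 1)) ↔ x = Xwalk ε n := by
  induction n with
  | zero => exact aInit_sub_even_iff
  | succ n ih =>
    intro x
    rw [ellEdge_succ, ellEdge_succ]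
    exact even_sub_iff_of_increment_edge ih (Xwalk_succ_eq_add_one_or_sub_one ε hε n) x
end

section
/- For every n ∈ ℕ with ℓ_n^- = ℓ_n^+, the modified local time f = ℓ~_n satisfies: |f(x+1) - f(x)| = 1 for all x ∈ ℤ; there exist x ≤ 0 and x' ≥ 0 with f(x) = f(x') = -1; f(x) = ã(x) for all x ≤ m₋(f) and all x ≥ m₊(f); and f(x) ≥ 0 for all x with m₋(f) < x < m₊(f). -/
open MeasureTheory Filter

/-!
Between two steps the walk's edge local time `g` (with the walker at `X`) keeps a rigid shape:
it has slopes `±1` except across the walker, where `g X - g (X - 1) ∈ {-2, 0, 2}`; it agrees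
with the initial profile `aInit` outside an interval `(a, b)` with `a < 0` even and `b ≥ 0` odd,
which contains `X` up to its right end; and it is nonnegative on `(a, b)`. Each step raises the
lower of the two edges at the walker, which preserves this shape (when the walker stands at `b`
the interval grows to `(a, b + 2)`), and stepping left is stepping right for the reflected walk.
At an equality time the two edges at the walker are equal, so collapsing them gives a vertex
function with slopes `±1` everywhere that equals `-1` at `a + 1` and at `b` and is nonnegative
strictly between; this pins down `m₋` and `m₊`.
-/

lemma aInit_eq (i : ℤ) :
    aInit i = if (0 ≤ i ∧ i % 2 = 0) ∨ (i < 0 ∧ i % 2 = 1) then 0 else -1 := by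
  unfold aInit
  simp only [Int.even_iff]
  split_ifs <;> omega

lemma aInit_neg_sub_one (i : ℤ) : aInit (-i - 1) = aInit i := by
  simp only [aInit_eq]
  split_ifs <;> omega

lemma abs_eq_one {x : ℤ} : |x| = 1 ↔ x = 1 ∨ x = -1 := abs_eq zero_le_one

lemma aTilde_eq (x : ℤ) : aTilde x = if x % 2 = 0 then 0 else -1 := by
  simp only [aTilde, Int.even_iff]

def incrAt (g : ℤ → ℤ) (k : ℤ) (i : ℤ) : ℤ := if i = k then g i + 1 else g i

lemma incrAt_of_ne {g : ℤ → ℤ} {k i : ℤ} (h : i ≠ k) : incrAt g k i = g i := if_neg h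

lemma le_incrAt (g : ℤ → ℤ) (k i : ℤ) : g i ≤ incrAt g k i := by
  unfold incrAt
  split_ifs <;> omega

lemma srwStep_right_or_left {ε : ℕ → ℤ} (hε : ∀ j, ε j = 1 ∨ ε j = -1) (s : SRWState) :
    (s.loc s.pos ≤ s.loc (s.pos - 1) ∧ (srwStep ε s).pos = s.pos + 1 ∧
        (srwStep ε s).loc = incrAt s.loc s.pos) ∨
      (s.loc (s.pos - 1) ≤ s.loc s.pos ∧ (srwStep ε s).pos = s.pos - 1 ∧
        (srwStep ε s).loc = incrAt s.loc (s.pos - 1)) := by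
  rcases lt_trichotomy (s.loc s.pos) (s.loc (s.pos - 1)) with h | h | h
  · left
    simp [srwStep, incrAt, h, h.le, funext_iff]
  · rcases hε s.coins with hc | hc
    · left
      simp [srwStep, incrAt, h, hc, funext_iff]
    · right
      simp [srwStep, incrAt, h, hc, funext_iff, ← sub_eq_add_neg]
  · right
    simp [srwStep, incrAt, h, h.le, not_lt.2 h.le, funext_iff]

structure SRWProfile (X : ℤ) (g : ℤ → ℤ) (a b : ℤ) : Prop where
  slope : ∀ i, i ≠ X - 1 → |g (i + 1) - g i| = 1
  gap : g X - g (X - 1) = -2 ∨ g X - g (X - 1) = 0 ∨ g X - g (X - 1) = 2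
  even_left : Even a
  left_neg : a < 0
  left_lt : a < X
  odd_right : Odd b
  right_nonneg : 0 ≤ b
  le_right : X ≤ b
  eq_left : ∀ i ≤ a, g i = aInit i
  eq_right : ∀ i, b ≤ i → g i = aInit i
  nonneg : ∀ i, a < i → i < b → 0 ≤ g i

namespace SRWProfile

variable {X : ℤ} {g : ℤ → ℤ} {a b : ℤ}

lemma init : SRWProfile 0 aInit (-2) 1 where
  slope i _ := by
    rw [abs_eq_one, aInit_eq, aInit_eq]
    split_ifs <;> omega
  gap := by simp [aInit_eq]
  even_left := by decide
  left_neg := by decide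
  left_lt := by decide
  odd_right := by decide
  right_nonneg := by decide
  le_right := by decide
  eq_left _ _ := rfl
  eq_right _ _ := rfl
  nonneg i _ _ := by
    rw [aInit_eq]
    split_ifs <;> omega

lemma reflect (h : SRWProfile X g a b) :
    SRWProfile (-X) (fun i => g (-i - 1)) (-b - 1) (-a - 1) where
  slope i hi := by
    have := h.slope (-i - 2) (by omega)
    rw [abs_eq_one] at this ⊢
    simp only [show -(i + 1) - 1 = -i - 2 by ring, show -i - 2 + 1 = -i - 1 by ring] at *
    omega
  gap := by
    have := h.gap
    simp only [neg_neg, show -(-X - 1) - 1 = X by ring]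
    omega
  even_left := h.odd_right.neg.sub_odd odd_one
  left_neg := by linarith [h.right_nonneg]
  left_lt := by linarith [h.le_right]
  odd_right := h.even_left.neg.sub_odd odd_one
  right_nonneg := by linarith [h.left_neg]
  le_right := by linarith [h.left_lt]
  eq_left i hi := by rw [h.eq_right _ (by omega), aInit_neg_sub_one]
  eq_right i hi := by rw [h.eq_left _ (by omega), aInit_neg_sub_one]
  nonneg i h1 h2 := h.nonneg _ (by omega) (by omega)


lemma aInit_left (h : SRWProfile X g a b) : aInit a = -1 := by
  have := Int.even_iff.1 h.even_left
  have := h.left_neg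
  rw [aInit_eq, if_neg (by omega)]

lemma aInit_right (h : SRWProfile X g a b) : aInit b = -1 := by
  have := Int.odd_iff.1 h.odd_right
  have := h.right_nonneg
  rw [aInit_eq, if_neg (by omega)]

lemma left_add_one_neg (h : SRWProfile X g a b) : a + 1 < 0 := by
  have := Int.even_iff.1 h.even_left
  have := h.left_neg
  omega

lemma right_pos (h : SRWProfile X g a b) : 0 < b := by
  have := Int.odd_iff.1 h.odd_right
  have := h.right_nonneg
  omega

lemma slope_incrAt (h : SRWProfile X g a b) (hle : g X ≤ g (X - 1)) (i : ℤ)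
    (hi : i ≠ X + 1 - 1) : |incrAt g X (i + 1) - incrAt g X i| = 1 := by
  rw [add_sub_cancel_right] at hi
  rcases eq_or_ne i (X - 1) with rfl | hi'
  · have := h.gap
    simp only [incrAt, abs_eq_one, sub_add_cancel]
    split_ifs <;> omega
  · have := h.slope i hi'
    simp only [incrAt, abs_eq_one] at this ⊢
    split_ifs <;> omega

lemma gap_incrAt (h : SRWProfile X g a b) :
    incrAt g X (X + 1) - incrAt g X (X + 1 - 1) = -2 ∨
      incrAt g X (X + 1) - incrAt g X (X + 1 - 1) = 0 ∨
      incrAt g X (X + 1) - incrAt g X (X + 1 - 1) = 2 := by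
  have := h.slope X (by omega)
  simp only [incrAt, abs_eq_one, add_sub_cancel_right] at *
  split_ifs <;> omega

lemma incrAt_right_of_lt (h : SRWProfile X g a b) (hle : g X ≤ g (X - 1)) (hXb : X < b) :
    SRWProfile (X + 1) (incrAt g X) a b where
  slope := h.slope_incrAt hle
  gap := h.gap_incrAt
  even_left := h.even_left
  left_neg := h.left_neg
  left_lt := by linarith [h.left_lt]
  odd_right := h.odd_right
  right_nonneg := h.right_nonneg
  le_right := hXb
  eq_left i hi := (incrAt_of_ne (by linarith [h.left_lt])).trans (h.eq_left i hi)
  eq_right i hi := (incrAt_of_ne (by omega)).trans (h.eq_right i hi)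
  nonneg i h1 h2 := (h.nonneg i h1 h2).trans (le_incrAt g X i)

lemma incrAt_right_of_eq (h : SRWProfile X g a b) (hle : g X ≤ g (X - 1)) (hXb : X = b) :
    SRWProfile (X + 1) (incrAt g X) a (b + 2) where
  slope := h.slope_incrAt hle
  gap := h.gap_incrAt
  even_left := h.even_left
  left_neg := h.left_neg
  left_lt := by linarith [h.left_lt]
  odd_right := h.odd_right.add_even even_two
  right_nonneg := by linarith [h.right_nonneg]
  le_right := by omega
  eq_left i hi := (incrAt_of_ne (by linarith [h.left_lt])).trans (h.eq_left i hi)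
  eq_right i hi := (incrAt_of_ne (by omega)).trans (h.eq_right i (by omega))
  nonneg i h1 h2 := by
    subst hXb
    rcases lt_trichotomy i X with hi | rfl | hi
    · exact (h.nonneg i h1 hi).trans (le_incrAt g _ i)
    · simp [incrAt, h.eq_right i le_rfl, h.aInit_right]
    · have := Int.odd_iff.1 h.odd_right
      have := h.right_nonneg
      rw [incrAt_of_ne hi.ne', h.eq_right i hi.le, aInit_eq, if_pos (by omega)]

lemma incrAt_right (h : SRWProfile X g a b) (hle : g X ≤ g (X - 1)) :
    ∃ a' b', SRWProfile (X + 1) (incrAt g X) a' b' := by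
  rcases h.le_right.lt_or_eq with hXb | hXb
  exacts [⟨a, b, h.incrAt_right_of_lt hle hXb⟩, ⟨a, b + 2, h.incrAt_right_of_eq hle hXb⟩]

lemma incrAt_left (h : SRWProfile X g a b) (hle : g (X - 1) ≤ g X) :
    ∃ a' b', SRWProfile (X - 1) (incrAt g (X - 1)) a' b' := by
  obtain ⟨a', b', h'⟩ := h.reflect.incrAt_right (by simpa using hle)
  have hg : (fun i => incrAt (fun i => g (-i - 1)) (-X) (-i - 1)) = incrAt g (X - 1) := by
    funext i
    simp only [incrAt, show -(-i - 1) - 1 = i by ring]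
    by_cases hi : i = X - 1
    · rw [if_pos (by omega), if_pos hi]
    · rw [if_neg (by omega), if_neg hi]
  have := h'.reflect
  rw [hg, show -(-X + 1) = X - 1 by ring] at this
  exact ⟨_, _, this⟩

end SRWProfile

lemma exists_srwProfile {ε : ℕ → ℤ} (hε : ∀ j, ε j = 1 ∨ ε j = -1) (n : ℕ) :
    ∃ a b, SRWProfile (srw ε n).pos (srw ε n).loc a b := by
  induction n with
  | zero => exact ⟨_, _, SRWProfile.init⟩
  | succ n ih =>
    obtain ⟨a, b, h⟩ := ih
    rcases srwStep_right_or_left hε (srw ε n) with ⟨hle, hpos, hloc⟩ | ⟨hle, hpos, hloc⟩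
    · simpa only [srw, hpos, hloc] using h.incrAt_right hle
    · simpa only [srw, hpos, hloc] using h.incrAt_left hle

def collapseAt (X : ℤ) (g : ℤ → ℤ) (x : ℤ) : ℤ := if x ≤ X then g (x - 1) else g x

lemma modLoc_eq_collapseAt (ε : ℕ → ℤ) (n : ℕ) :
    modLoc ε n = collapseAt (srw ε n).pos (srw ε n).loc := rfl

namespace SRWProfile

variable {X : ℤ} {g : ℤ → ℤ} {a b : ℤ}

lemma collapseAt_left (h : SRWProfile X g a b) (x : ℤ) (hx : x ≤ a + 1) :
    collapseAt X g x = aTilde x := by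
  have := h.left_neg
  rw [collapseAt, if_pos (by linarith [h.left_lt]), h.eq_left _ (by omega), aInit_eq, aTilde_eq]
  split_ifs <;> omega

lemma collapseAt_left_end (h : SRWProfile X g a b) : collapseAt X g (a + 1) = -1 := by
  rw [collapseAt, if_pos (by linarith [h.left_lt]), add_sub_cancel_right, h.eq_left a le_rfl,
    h.aInit_left]

lemma collapseAt_nonneg (h : SRWProfile X g a b) (x : ℤ) (h1 : a + 1 < x) (h2 : x < b) :
    0 ≤ collapseAt X g x := by
  unfold collapseAt
  split_ifs with hx
  · exact h.nonneg _ (by omega) (by linarith [h.le_right])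
  · exact h.nonneg _ (by linarith [h.left_lt]) h2

lemma add_two_le (h : SRWProfile X g a b) (heq : g (X - 1) = g X) : a + 2 ≤ X := by
  by_contra! hX
  have hXa : a = X - 1 := by linarith [h.left_lt]
  have := h.nonneg X (by omega) (by linarith [h.left_add_one_neg, h.right_nonneg])
  rw [← heq, ← hXa, h.eq_left a le_rfl, h.aInit_left] at this
  omega

lemma lt_right (h : SRWProfile X g a b) (heq : g (X - 1) = g X) : X < b := by
  refine lt_of_le_of_ne h.le_right fun hXb => ?_
  have := h.nonneg (X - 1) (by linarith [h.add_two_le heq]) (by omega)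
  rw [heq, hXb, h.eq_right b le_rfl, h.aInit_right] at this
  omega

lemma collapseAt_slope (h : SRWProfile X g a b) (heq : g (X - 1) = g X) (x : ℤ) :
    |collapseAt X g (x + 1) - collapseAt X g x| = 1 := by
  unfold collapseAt
  rcases lt_trichotomy x X with hx | rfl | hx
  · rw [if_pos (show x + 1 ≤ X from hx), if_pos hx.le, add_sub_cancel_right]
    simpa using h.slope (x - 1) (by omega)
  · rw [if_neg (by omega), if_pos le_rfl, heq]
    exact h.slope x (by omega)
  · rw [if_neg (by omega), if_neg (by omega)]
    exact h.slope x (by omega)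

lemma collapseAt_right (h : SRWProfile X g a b) (heq : g (X - 1) = g X) (x : ℤ) (hx : b ≤ x) :
    collapseAt X g x = aTilde x := by
  have := h.right_nonneg
  rw [collapseAt, if_neg (by linarith [h.lt_right heq]), h.eq_right x hx, aInit_eq, aTilde_eq]
  split_ifs <;> omega

lemma collapseAt_right_end (h : SRWProfile X g a b) (heq : g (X - 1) = g X) :
    collapseAt X g b = -1 := by
  rw [collapseAt, if_neg (not_le.2 (h.lt_right heq)), h.eq_right b le_rfl, h.aInit_right]

end SRWProfile

lemma mMinus_eq {f : ℤ → ℤ} {p : ℤ} (hp : p ≤ 0) (hfp : f p = -1)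
    (hne : ∀ x, p < x → x ≤ 0 → f x ≠ -1) : mMinus f = p + 1 := by
  have : IsGreatest {x : ℤ | x ≤ 0 ∧ f x = -1} p :=
    ⟨⟨hp, hfp⟩, fun x hx => not_lt.1 fun hpx => hne x hpx hx.1 hx.2⟩
  rw [mMinus, this.csSup_eq, add_comm]

lemma mPlus_eq {f : ℤ → ℤ} {q : ℤ} (hq : 0 ≤ q) (hfq : f q = -1)
    (hne : ∀ x, 0 ≤ x → x < q → f x ≠ -1) : mPlus f = q - 1 := by
  have : IsLeast {x : ℤ | 0 ≤ x ∧ f x = -1} q :=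
    ⟨⟨hq, hfq⟩, fun x hx => not_lt.1 fun hxq => hne x hx.1 hxq hx.2⟩
  rw [mPlus, this.csInf_eq, neg_add_eq_sub]

theorem aTilde_outside_mMinus_mPlus {f : ℤ → ℤ} {p q : ℤ} (hp : p < 0) (hq : 0 < q)
    (hslope : ∀ x, |f (x + 1) - f x| = 1) (hleft : ∀ x ≤ p, f x = aTilde x)
    (hright : ∀ x, q ≤ x → f x = aTilde x) (hfp : f p = -1) (hfq : f q = -1)
    (hpos : ∀ x, p < x → x < q → 0 ≤ f x) :
    (∀ x, x ≤ mMinus f → f x = aTilde x) ∧ (∀ x, mPlus f ≤ x → f x = aTilde x) ∧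
      (∀ x, mMinus f < x → x < mPlus f → 0 ≤ f x) := by
  have hm : mMinus f = p + 1 :=
    mMinus_eq hp.le hfp fun x h1 h2 => by linarith [hpos x h1 (by omega)]
  have hM : mPlus f = q - 1 :=
    mPlus_eq hq.le hfq fun x h1 h2 => by linarith [hpos x (by omega) h2]
  have hp_odd : p % 2 = 1 := by
    have := hleft p le_rfl
    rw [hfp, aTilde_eq] at this
    split_ifs at this
    omega
  have hq_odd : q % 2 = 1 := by
    have := hright q le_rfl
    rw [hfq, aTilde_eq] at this
    split_ifs at this
    omega
  -- next to a `-1`, slope `±1` and nonnegativity force the value `0`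
  have hp1 : f (p + 1) = aTilde (p + 1) := by
    have := hslope p
    have := hpos (p + 1) (by omega) (by omega)
    rw [abs_eq_one] at *
    rw [aTilde_eq, if_pos (by omega)]
    omega
  have hq1 : f (q - 1) = aTilde (q - 1) := by
    have := hslope (q - 1)
    have := hpos (q - 1) (by omega) (by omega)
    rw [abs_eq_one, sub_add_cancel] at *
    rw [aTilde_eq, if_pos (by omega)]
    omega
  rw [hm, hM]
  refine ⟨fun x hx => ?_, fun x hx => ?_, fun x h1 h2 => hpos x (by omega) (by omega)⟩
  · rcases hx.lt_or_eq with hx | rfl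
    exacts [hleft x (by omega), hp1]
  · rcases hx.lt_or_eq with hx | rfl
    exacts [hright x (by omega), hq1]

/-- at an equality time `n`, the modified local time `f = ℓ~_n`
has slopes `±1`, hits `-1` on both sides of the origin, agrees with `ã`
outside `(m₋(f), m₊(f))`, and is nonnegative inside. -/
theorem statement7 (ε : ℕ → ℤ) (hε : ∀ j, ε j = 1 ∨ ε j = -1) (n : ℕ)
    (heq : IsEqTime ε n) :
    (∀ x : ℤ, |modLoc ε n (x + 1) - modLoc ε n x| = 1) ∧
      (∃ x : ℤ, x ≤ 0 ∧ modLoc ε n x = -1) ∧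
      (∃ x : ℤ, 0 ≤ x ∧ modLoc ε n x = -1) ∧
      (∀ x : ℤ, x ≤ mMinus (modLoc ε n) → modLoc ε n x = aTilde x) ∧
      (∀ x : ℤ, mPlus (modLoc ε n) ≤ x → modLoc ε n x = aTilde x) ∧
      (∀ x : ℤ, mMinus (modLoc ε n) < x → x < mPlus (modLoc ε n) →
        0 ≤ modLoc ε n x) := by
  obtain ⟨a, b, h⟩ := exists_srwProfile hε n
  have heq : (srw ε n).loc ((srw ε n).pos - 1) = (srw ε n).loc (srw ε n).pos := heq
  rw [modLoc_eq_collapseAt]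
  exact ⟨h.collapseAt_slope heq, ⟨a + 1, h.left_add_one_neg.le, h.collapseAt_left_end⟩,
    ⟨b, h.right_pos.le, h.collapseAt_right_end heq⟩,
    aTilde_outside_mMinus_mPlus h.left_add_one_neg h.right_pos (h.collapseAt_slope heq)
      h.collapseAt_left (h.collapseAt_right heq) h.collapseAt_left_end
      (h.collapseAt_right_end heq) h.collapseAt_nonneg⟩
end

section
/- Let n ∈ ℕ with ℓ_n^- = ℓ_n^+ and set f = ℓ~_n. Then every x ∈ ℤ with m₋(f) < x < m₊(f) and f(x) = 0 satisfies min(0, X_n) < x < max(0, X_n); consequently X_n ∈ I(f). -/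
open MeasureTheory Filter

/-!
Let `lo ≤ min 0 X` and `max 0 X ≤ hi` be the extreme sites visited by time `n`. Local times
outside `[lo, hi)` are still the initial ones, every visited edge has local time `≥ 0`, and a
visited edge outside `[min 0 X, max 0 X)` has been crossed at least twice, so its local time is
`≥ 1` (initial local times are `≥ -1`). At an equality time this makes `f = ℓ~_n` equal to `ã`
outside `(lo, hi)`, nonnegative on `(lo, hi)` and at `X`, and positive on `(lo, min 0 X]` and
`[max 0 X, hi)`. Hence the `-1`s of `f` closest to the origin lie at or beyond `lo` and `hi`,
a zero of `f` outside `(min 0 X, max 0 X)` is a zero of `ã` beyond `lo` or `hi`, next to a `-1`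
of `f`, and the position of `X` in `I(f)` follows by comparing the extremal zeros with `0`
and `X`.
-/

lemma aTilde_spec (x : ℤ) : x % 2 = 0 ∧ aTilde x = 0 ∨ x % 2 = 1 ∧ aTilde x = -1 := by
  unfold aTilde
  rcases Int.emod_two_eq_zero_or_one x with h | h
  · exact Or.inl ⟨h, if_pos (Int.even_iff.mpr h)⟩
  · exact Or.inr ⟨h, if_neg (by rw [Int.even_iff]; omega)⟩

lemma aInit_of_neg {i : ℤ} (hi : i < 0) : aInit i = aTilde (i + 1) := by
  simp only [aInit, aTilde, if_neg (not_le.mpr hi), show -i - 1 = -(i + 1) by ring, even_neg]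

lemma aInit_of_nonneg {i : ℤ} (hi : 0 ≤ i) : aInit i = aTilde i := by
  simp only [aInit, aTilde, if_pos hi]

section Extrema

variable {f : ℤ → ℤ}

lemma le_mMinus {x : ℤ} (hx : x ≤ 0) (hfx : f x = -1) : x + 1 ≤ mMinus f := by
  have := le_csSup (⟨0, fun y hy => hy.1⟩ : BddAbove {x : ℤ | x ≤ 0 ∧ f x = -1}) ⟨hx, hfx⟩
  unfold mMinus; omega

lemma mMinus_le {b : ℤ} (hne : ∃ x ≤ 0, f x = -1) (hb : ∀ x ≤ 0, f x = -1 → x < b) :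
    mMinus f ≤ b := by
  obtain ⟨x, hx, hfx⟩ := hne
  have := csSup_le (s := {x : ℤ | x ≤ 0 ∧ f x = -1}) ⟨x, hx, hfx⟩ fun y hy =>
    Int.le_sub_one_of_lt (hb y hy.1 hy.2)
  unfold mMinus; omega

lemma mPlus_le {x : ℤ} (hx : 0 ≤ x) (hfx : f x = -1) : mPlus f ≤ x - 1 := by
  have := csInf_le (⟨0, fun y hy => hy.1⟩ : BddBelow {x : ℤ | 0 ≤ x ∧ f x = -1}) ⟨hx, hfx⟩
  unfold mPlus; omega

lemma le_mPlus {b : ℤ} (hne : ∃ x, 0 ≤ x ∧ f x = -1) (hb : ∀ x, 0 ≤ x → f x = -1 → b < x) :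
    b ≤ mPlus f := by
  obtain ⟨x, hx, hfx⟩ := hne
  have := le_csInf (s := {x : ℤ | 0 ≤ x ∧ f x = -1}) ⟨x, hx, hfx⟩ fun y hy =>
    Int.add_one_le_of_lt (hb y hy.1 hy.2)
  unfold mPlus; omega

lemma le_oPlus {x : ℤ} (hx : x < mPlus f) (hfx : f x = 0) : x ≤ oPlus f :=
  le_csSup ⟨mPlus f, fun _ hy => hy.1.le⟩ ⟨hx, hfx⟩

lemma oPlus_le {b : ℤ} (hne : ∃ x < mPlus f, f x = 0) (hb : ∀ x < mPlus f, f x = 0 → x ≤ b) :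
    oPlus f ≤ b := by
  obtain ⟨x, hx, hfx⟩ := hne
  exact csSup_le ⟨x, hx, hfx⟩ fun y hy => hb y hy.1 hy.2

lemma le_oMinus {b : ℤ} (hne : ∃ x, mMinus f < x ∧ f x = 0)
    (hb : ∀ x, mMinus f < x → f x = 0 → b ≤ x) : b ≤ oMinus f := by
  obtain ⟨x, hx, hfx⟩ := hne
  exact le_csInf ⟨x, hx, hfx⟩ fun y hy => hb y hy.1 hy.2

lemma mem_interI_of_zeros_between {X : ℤ} (hm : mMinus f ≤ min 0 X) (hp : max 0 X ≤ mPlus f)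
    (hzeros : ∀ x, mMinus f < x → x < mPlus f → f x = 0 → min 0 X < x ∧ x < max 0 X) :
    X ∈ interI f := by
  unfold interI
  split_ifs with haTilde hnZeros hoPlus
  · subst haTilde
    have h₁ := le_mMinus (f := aTilde) (x := -1) (by omega) rfl
    have h₂ := mPlus_le (f := aTilde) (x := 1) (by omega) rfl
    rw [Set.mem_singleton_iff]; omega
  · exact ⟨by omega, by omega⟩
  all_goals
    obtain ⟨z, hzm, hzp, hz⟩ := Set.nonempty_of_ncard_ne_zero hnZeros
    have hzX := hzeros z hzm hzp hz
  · have : oPlus f ≤ max 0 (X - 1) := oPlus_le ⟨z, hzp, hz⟩ fun x hxp hx => by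
      by_cases hxm : mMinus f < x
      · have := hzeros x hxm hxp hx; omega
      · omega
    exact ⟨by omega, by omega⟩
  · have := le_oPlus hzp hz
    have : X + 1 ≤ oMinus f := le_oMinus ⟨z, hzm, hz⟩ fun x hxm hx => by
      by_cases hxp : x < mPlus f
      · have := hzeros x hxm hxp hx; omega
      · omega
    exact ⟨by omega, by omega⟩

end Extrema

structure SRWInvariant (L : ℤ → ℤ) (X lo hi : ℤ) : Prop where
  lo_le : lo ≤ min 0 X
  le_hi : max 0 X ≤ hi
  eq_aInit : ∀ i, i < lo ∨ hi ≤ i → L i = aInit i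
  nonneg : ∀ i, lo ≤ i → i < hi → 0 ≤ L i
  pos : ∀ i, lo ≤ i → i < hi → i < min 0 X ∨ max 0 X ≤ i → 1 ≤ L i

lemma SRWInvariant.step {L : ℤ → ℤ} {X lo hi X' : ℤ} (h : SRWInvariant L X lo hi)
    (hX' : X' = X + 1 ∨ X' = X - 1) :
    SRWInvariant (fun i => if i = min X X' then L i + 1 else L i) X' (min lo X') (max hi X') := by
  obtain ⟨hlo, hhi, hinit, hnonneg, hpos⟩ := h
  have hcrossed : -1 ≤ L (min X X') := by
    by_cases hin : lo ≤ min X X' ∧ min X X' < hi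
    · linarith [hnonneg _ hin.1 hin.2]
    · rw [hinit _ (by omega)]; exact neg_one_le_aInit _
  refine ⟨by omega, by omega, fun i hi' => ?_, fun i hlo' hhi' => ?_, fun i hlo' hhi' hout => ?_⟩
  · rw [if_neg (by omega)]; exact hinit i (by omega)
  · split_ifs with he
    · subst he; linarith
    · exact hnonneg i (by omega) (by omega)
  · split_ifs with he
    · subst he
      linarith [hnonneg (min X X') (by omega) (by omega)]
    · exact hpos i (by omega) (by omega) (by omega)

lemma srw_succ_pos (ε : ℕ → ℤ) (hε : ∀ j, ε j = 1 ∨ ε j = -1) (n : ℕ) :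
    (srw ε (n + 1)).pos = (srw ε n).pos + 1 ∨ (srw ε (n + 1)).pos = (srw ε n).pos - 1 := by
  simp only [srw, srwStep]
  split_ifs
  · exact Or.inl rfl
  · exact Or.inr rfl
  · rcases hε (srw ε n).coins with h | h <;> rw [h] <;> omega

lemma exists_srwInvariant (ε : ℕ → ℤ) (hε : ∀ j, ε j = 1 ∨ ε j = -1) (n : ℕ) :
    ∃ lo hi, SRWInvariant (srw ε n).loc (srw ε n).pos lo hi := by
  induction n with
  | zero =>
    show ∃ lo hi, SRWInvariant aInit 0 lo hi
    exact ⟨0, 0, by simp, by simp, fun _ _ => rfl, fun _ _ _ => by omega, fun _ _ _ => by omega⟩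
  | succ n ih =>
    obtain ⟨lo, hi, h⟩ := ih
    exact ⟨_, _, h.step (srw_succ_pos ε hε n)⟩

structure EqTimeProfile (f : ℤ → ℤ) (X lo hi : ℤ) : Prop where
  lo_le : lo ≤ min 0 X
  le_hi : max 0 X ≤ hi
  eq_aTilde : ∀ x, x ≤ lo ∨ hi ≤ x → f x = aTilde x
  nonneg : ∀ x, lo < x → x < hi → 0 ≤ f x
  nonneg_self : 0 ≤ f X
  pos_left : ∀ x, lo < x → x ≤ min 0 X → 1 ≤ f x
  pos_right : ∀ x, max 0 X ≤ x → x < hi → 1 ≤ f x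

lemma SRWInvariant.eqTimeProfile {L : ℤ → ℤ} {X lo hi : ℤ} (h : SRWInvariant L X lo hi)
    (heq : L (X - 1) = L X) :
    EqTimeProfile (fun x => if x ≤ X then L (x - 1) else L x) X lo hi := by
  obtain ⟨hlo, hhi, hinit, hnonneg, hpos⟩ := h
  refine ⟨hlo, hhi, fun x hx => ?_, fun x hlx hxh => ?_, ?_, fun x hlx hx => ?_,
    fun x hx hxh => ?_⟩
  · split_ifs with hxX
    · rcases hx with hx | hx
      · rw [hinit _ (by omega), aInit_of_neg (by omega), sub_add_cancel]
      · obtain rfl : x = X := by omega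
        rw [heq, hinit _ (by omega), aInit_of_nonneg (by omega)]
    · rw [hinit _ (by omega), aInit_of_nonneg (by omega)]
  · split_ifs
    · exact hnonneg _ (by omega) (by omega)
    · exact hnonneg _ (by omega) (by omega)
  · simp only [le_refl, if_true]
    by_cases hX : lo ≤ X - 1
    · exact hnonneg _ hX (by omega)
    · by_cases hXh : X < hi
      · rw [heq]; exact hnonneg _ (by omega) hXh
      · rw [hinit _ (by omega), aInit_of_neg (by omega)]
        obtain rfl : X = 0 := by omega
        rfl
  · simp only [if_pos (show x ≤ X by omega)]
    exact hpos _ (by omega) (by omega) (by omega)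
  · split_ifs with hxX
    · obtain rfl : x = X := by omega
      rw [heq]; exact hpos _ (by omega) hxh (by omega)
    · exact hpos _ (by omega) hxh (by omega)

namespace EqTimeProfile

variable {f : ℤ → ℤ} {X lo hi : ℤ} (hf : EqTimeProfile f X lo hi)
include hf

lemma far_and_ne_of_eq_neg_one {x : ℤ} (hfx : f x = -1) : (x ≤ lo ∨ hi ≤ x) ∧ x ≠ X ∧ x ≠ 0 := by
  have hfar : x ≤ lo ∨ hi ≤ x := by
    by_contra! hnear
    have := hf.nonneg x hnear.1 hnear.2
    omega
  refine ⟨hfar, fun h => ?_, fun h => ?_⟩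
  · have := hf.nonneg_self
    rw [← h] at this; omega
  · rw [hf.eq_aTilde x hfar, h] at hfx
    exact absurd hfx (by decide)

lemma exists_nonpos_eq_neg_one : ∃ x ≤ 0, f x = -1 := by
  have := hf.lo_le
  obtain ⟨x, hxlo, hx⟩ : ∃ x ≤ lo, x % 2 = 1 := by
    rcases Int.emod_two_eq_zero_or_one lo with h | h
    · exact ⟨lo - 1, by omega, by omega⟩
    · exact ⟨lo, le_rfl, h⟩
  refine ⟨x, by omega, ?_⟩
  rw [hf.eq_aTilde x (Or.inl hxlo)]
  rcases aTilde_spec x with h | h <;> omega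

lemma exists_nonneg_eq_neg_one : ∃ x, 0 ≤ x ∧ f x = -1 := by
  have := hf.le_hi
  obtain ⟨x, hhix, hx⟩ : ∃ x, hi ≤ x ∧ x % 2 = 1 := by
    rcases Int.emod_two_eq_zero_or_one hi with h | h
    · exact ⟨hi + 1, by omega, by omega⟩
    · exact ⟨hi, le_rfl, h⟩
  refine ⟨x, by omega, ?_⟩
  rw [hf.eq_aTilde x (Or.inr hhix)]
  rcases aTilde_spec x with h | h <;> omega

lemma mMinus_le_min : mMinus f ≤ min 0 X :=
  mMinus_le hf.exists_nonpos_eq_neg_one fun x hx hfx => by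
    have := hf.far_and_ne_of_eq_neg_one hfx; have := hf.lo_le; have := hf.le_hi
    omega

lemma max_le_mPlus : max 0 X ≤ mPlus f :=
  le_mPlus hf.exists_nonneg_eq_neg_one fun x hx hfx => by
    have := hf.far_and_ne_of_eq_neg_one hfx; have := hf.lo_le; have := hf.le_hi
    omega

lemma le_mMinus_of_eq_zero {x : ℤ} (hx : x ≤ min 0 X) (hfx : f x = 0) : x ≤ mMinus f := by
  have hxlo : x ≤ lo := by
    by_contra! hlx
    have := hf.pos_left x hlx hx
    omega
  have hodd : f (x - 1) = -1 := by
    rw [hf.eq_aTilde x (Or.inl hxlo)] at hfx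
    rw [hf.eq_aTilde (x - 1) (Or.inl (by omega))]
    rcases aTilde_spec x with h | h <;> rcases aTilde_spec (x - 1) with h' | h' <;> omega
  have := le_mMinus (by omega) hodd
  omega

lemma mPlus_le_of_eq_zero {x : ℤ} (hx : max 0 X ≤ x) (hfx : f x = 0) : mPlus f ≤ x := by
  have hhix : hi ≤ x := by
    by_contra! hxh
    have := hf.pos_right x hx hxh
    omega
  have hodd : f (x + 1) = -1 := by
    rw [hf.eq_aTilde x (Or.inr hhix)] at hfx
    rw [hf.eq_aTilde (x + 1) (Or.inr (by omega))]
    rcases aTilde_spec x with h | h <;> rcases aTilde_spec (x + 1) with h' | h' <;> omega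
  have := mPlus_le (by omega) hodd
  omega

lemma zeros_between (x : ℤ) (hm : mMinus f < x) (hp : x < mPlus f) (hfx : f x = 0) :
    min 0 X < x ∧ x < max 0 X := by
  constructor
  · by_contra! h
    have := hf.le_mMinus_of_eq_zero h hfx
    omega
  · by_contra! h
    have := hf.mPlus_le_of_eq_zero h hfx
    omega

end EqTimeProfile

/-- at an equality time `n` with `f = ℓ~_n`, every internal zero
of `f` lies strictly between `0` and `X_n`; consequently `X_n ∈ I(f)`. -/
theorem statement9 (ε : ℕ → ℤ) (hε : ∀ j, ε j = 1 ∨ ε j = -1) (n : ℕ)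
    (heq : IsEqTime ε n) :
    (∀ x : ℤ, mMinus (modLoc ε n) < x → x < mPlus (modLoc ε n) →
        modLoc ε n x = 0 →
        min 0 (Xwalk ε n) < x ∧ x < max 0 (Xwalk ε n)) ∧
      Xwalk ε n ∈ interI (modLoc ε n) := by
  obtain ⟨lo, hi, hinv⟩ := exists_srwInvariant ε hε n
  have hf : EqTimeProfile (modLoc ε n) (Xwalk ε n) lo hi := hinv.eqTimeProfile heq
  exact ⟨hf.zeros_between,
    mem_interI_of_zeros_between hf.mMinus_le_min hf.max_le_mPlus hf.zeros_between⟩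
end

section
/- For each real A > 2, let q_A be a geometric random variable with P(q_A = k) = (2/A)(1 - 2/A)^{k-1} for integers k ≥ 1. Then E[(1 - 2/A)^{√(2 q_A)}] → 1 and E[(1 - 2/A)^{-√(2 q_A)}] → 1 as A → ∞; in particular, the latter expectation is finite for every A > 2. -/
/-!
Write `w j = p (1 - p) ^ j` for the law of `q - 1`, where `p = 2 / A`, and `u j = (1 - p) ^ x j`
with `x j = √(2 (j + 1)) ≥ 0`. Since `u ≤ 1`, `∑ w u ≤ 1`; since `u + u⁻¹ ≥ 2`,
`∑ w u + ∑ w u⁻¹ ≥ 2`. So both limits follow once `limsup ∑ w u⁻¹ ≤ 1` as `p → 0`.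

For that only the sublinear growth of `x` matters: if `x j ≤ t (j + 1) + b` with `0 ≤ t < 1`,
then `∑ w u⁻¹` is dominated by a geometric series of ratio `(1 - p) ^ (1 - t)`, and Bernoulli's
inequality bounds its sum by `(1 - p) ^ (-(t + b)) / (1 - t)`, which tends to `1 / (1 - t)`
as `p → 0`. Now let `t → 0`; for `x j = √(2 (j + 1))` every `t > 0` works, with `b = 1 / (2 t)`.
-/

open Filter Topology

lemma sqrt_two_mul_le_mul_add {t k : ℝ} (ht : 0 < t) (hk : 0 ≤ k) :
    √(2 * k) ≤ t * k + 1 / (2 * t) := by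
  have hu : √(2 * k) ^ 2 = 2 * k := Real.sq_sqrt (by positivity)
  generalize √(2 * k) = u at hu ⊢
  have hsq : t * k + 1 / (2 * t) - u = (t * u - 1) ^ 2 / (2 * t) := by
    field_simp
    linear_combination (-t ^ 2) * hu
  have : 0 ≤ (t * u - 1) ^ 2 / (2 * t) := by positivity
  linarith

lemma two_le_tsum_mul_add_tsum_mul {ι : Type*} {w u v : ι → ℝ} (hw : HasSum w 1)
    (hw0 : ∀ i, 0 ≤ w i) (hu : ∀ i, 0 ≤ u i) (hv : ∀ i, 0 ≤ v i) (huv : ∀ i, u i * v i = 1)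
    (hwu : Summable fun i => w i * u i) (hwv : Summable fun i => w i * v i) :
    2 ≤ ∑' i, w i * u i + ∑' i, w i * v i := by
  have hamgm : ∀ i, 2 * w i ≤ w i * u i + w i * v i := fun i => by
    have : 2 ≤ u i + v i := by nlinarith [sq_nonneg (u i - v i), hu i, hv i, huv i]
    nlinarith [hw0 i]
  calc (2 : ℝ) = ∑' i, 2 * w i := by rw [tsum_mul_left, hw.tsum_eq, mul_one]
    _ ≤ ∑' i, (w i * u i + w i * v i) :=
      (hw.summable.mul_left 2).tsum_le_tsum hamgm (hwu.add hwv)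
    _ = _ := hwu.tsum_add hwv

section GeometricWeights

variable {p t b : ℝ} {x : ℕ → ℝ}

lemma hasSum_geometric_weight (hp0 : 0 < p) (hp1 : p < 1) :
    HasSum (fun j : ℕ => p * (1 - p) ^ j) 1 := by
  have := (hasSum_geometric_of_lt_one (by linarith) (by linarith : 1 - p < 1)).mul_left p
  rwa [sub_sub_cancel, mul_inv_cancel₀ hp0.ne'] at this

lemma geometric_mul_rpow_le (hp0 : 0 ≤ p) (hp1 : p < 1) (hx0 : ∀ j, 0 ≤ x j) (j : ℕ) :
    p * (1 - p) ^ j * (1 - p) ^ x j ≤ p * (1 - p) ^ j := by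
  have hr0 : 0 < 1 - p := by linarith
  exact mul_le_of_le_one_right (by positivity) (Real.rpow_le_one hr0.le (by linarith) (hx0 j))

lemma summable_rpow_geometric (hp0 : 0 < p) (hp1 : p < 1) (hx0 : ∀ j, 0 ≤ x j) :
    Summable fun j : ℕ => p * (1 - p) ^ j * (1 - p) ^ x j := by
  have hr0 : 0 < 1 - p := by linarith
  exact Summable.of_nonneg_of_le (fun j => by positivity) (geometric_mul_rpow_le hp0.le hp1 hx0)
    (hasSum_geometric_weight hp0 hp1).summable

lemma tsum_rpow_geometric_le_one (hp0 : 0 < p) (hp1 : p < 1) (hx0 : ∀ j, 0 ≤ x j) :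
    ∑' j : ℕ, p * (1 - p) ^ j * (1 - p) ^ x j ≤ 1 :=
  ((summable_rpow_geometric hp0 hp1 hx0).tsum_le_tsum (geometric_mul_rpow_le hp0.le hp1 hx0)
    (hasSum_geometric_weight hp0 hp1).summable).trans_eq (hasSum_geometric_weight hp0 hp1).tsum_eq

lemma geometric_mul_rpow_neg_le (hp0 : 0 < p) (hp1 : p < 1) (j : ℕ)
    (hx : x j ≤ t * (j + 1) + b) :
    p * (1 - p) ^ j * (1 - p) ^ (-x j) ≤ p * (1 - p) ^ (-(t + b)) * ((1 - p) ^ (1 - t)) ^ j := by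
  have hr0 : 0 < 1 - p := by linarith
  have hexp : (1 - p) ^ (-x j) ≤ (1 - p) ^ (-(t * (j + 1) + b)) :=
    Real.rpow_le_rpow_of_exponent_ge hr0 (by linarith) (by linarith)
  have hsplit : (1 - p) ^ j * (1 - p) ^ (-(t * (j + 1) + b)) =
      (1 - p) ^ (-(t + b)) * ((1 - p) ^ (1 - t)) ^ j := by
    rw [← Real.rpow_natCast, ← Real.rpow_natCast, ← Real.rpow_mul hr0.le, ← Real.rpow_add hr0,
      ← Real.rpow_add hr0]
    ring_nf
  calc p * (1 - p) ^ j * (1 - p) ^ (-x j)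
      ≤ p * ((1 - p) ^ j * (1 - p) ^ (-(t * (j + 1) + b))) := by
        rw [← mul_assoc]; gcongr
    _ = _ := by rw [hsplit, mul_assoc]

lemma summable_rpow_neg_geometric (hp0 : 0 < p) (hp1 : p < 1) (ht1 : t < 1)
    (hx : ∀ j : ℕ, x j ≤ t * (j + 1) + b) :
    Summable fun j : ℕ => p * (1 - p) ^ j * (1 - p) ^ (-x j) := by
  have hr0 : 0 < 1 - p := by linarith
  have hq1 : (1 - p) ^ (1 - t) < 1 := Real.rpow_lt_one hr0.le (by linarith) (by linarith)
  exact Summable.of_nonneg_of_le (fun j => by positivity)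
    (fun j => geometric_mul_rpow_neg_le hp0 hp1 j (hx j))
    ((summable_geometric_of_lt_one (by positivity) hq1).mul_left _)

lemma tsum_rpow_neg_geometric_le (hp0 : 0 < p) (hp1 : p < 1) (ht0 : 0 ≤ t) (ht1 : t < 1)
    (hx : ∀ j : ℕ, x j ≤ t * (j + 1) + b) :
    ∑' j : ℕ, p * (1 - p) ^ j * (1 - p) ^ (-x j) ≤ (1 - p) ^ (-(t + b)) / (1 - t) := by
  have hr0 : 0 < 1 - p := by linarith
  set q := (1 - p) ^ (1 - t)
  have hq1 : q < 1 := Real.rpow_lt_one hr0.le (by linarith) (by linarith)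
  have hbernoulli : q ≤ 1 - (1 - t) * p := by
    have h := rpow_one_add_le_one_add_mul_self (s := -p) (p := 1 - t) (by linarith)
      (by linarith) (by linarith)
    rw [← sub_eq_add_neg] at h
    linarith
  calc ∑' j : ℕ, p * (1 - p) ^ j * (1 - p) ^ (-x j)
      ≤ ∑' j : ℕ, p * (1 - p) ^ (-(t + b)) * q ^ j :=
        (summable_rpow_neg_geometric hp0 hp1 ht1 hx).tsum_le_tsum
          (fun j => geometric_mul_rpow_neg_le hp0 hp1 j (hx j))
          ((summable_geometric_of_lt_one (by positivity) hq1).mul_left _)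
    _ = (1 - p) ^ (-(t + b)) * (p / (1 - q)) := by
        rw [tsum_mul_left, tsum_geometric_of_lt_one (by positivity) hq1]; ring
    _ ≤ (1 - p) ^ (-(t + b)) * (1 / (1 - t)) := by
        refine mul_le_mul_of_nonneg_left ?_ (by positivity)
        rw [div_le_div_iff₀ (by linarith) (by linarith)]
        nlinarith
    _ = _ := by ring

lemma two_le_tsum_rpow_geometric_add_tsum_rpow_neg_geometric (hp0 : 0 < p) (hp1 : p < 1)
    (hx0 : ∀ j, 0 ≤ x j) (hsum : Summable fun j : ℕ => p * (1 - p) ^ j * (1 - p) ^ (-x j)) :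
    2 ≤ ∑' j : ℕ, p * (1 - p) ^ j * (1 - p) ^ x j +
      ∑' j : ℕ, p * (1 - p) ^ j * (1 - p) ^ (-x j) := by
  have hr0 : 0 < 1 - p := by linarith
  refine two_le_tsum_mul_add_tsum_mul (hasSum_geometric_weight hp0 hp1) (fun j => by positivity)
    (fun j => by positivity) (fun j => by positivity) (fun j => ?_)
    (summable_rpow_geometric hp0 hp1 hx0) hsum
  rw [Real.rpow_neg hr0.le, mul_inv_cancel₀ (by positivity)]

end GeometricWeights

section Sublinear

variable {x : ℕ → ℝ}

theorem tendsto_tsum_rpow_neg_geometric (hx0 : ∀ j, 0 ≤ x j)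
    (hx : ∀ t > 0, ∃ b, ∀ j : ℕ, x j ≤ t * (j + 1) + b) :
    Tendsto (fun p : ℝ => ∑' j : ℕ, p * (1 - p) ^ j * (1 - p) ^ (-x j)) (𝓝[>] 0) (𝓝 1) := by
  refine tendsto_order.2 ⟨fun a ha => ?_, fun a ha => ?_⟩
  · obtain ⟨b, hb⟩ := hx (1 / 2) (by norm_num)
    filter_upwards [Ioo_mem_nhdsGT one_pos] with p hp
    have h2 := two_le_tsum_rpow_geometric_add_tsum_rpow_neg_geometric hp.1 hp.2 hx0
      (summable_rpow_neg_geometric hp.1 hp.2 (by norm_num) hb)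
    linarith [tsum_rpow_geometric_le_one hp.1 hp.2 hx0]
  · have hsmall : ∀ᶠ t in 𝓝[>] (0 : ℝ), t ∈ Set.Ioo 0 1 ∧ 1 / (1 - t) < a := by
      have hcont : ContinuousAt (fun t : ℝ => 1 / (1 - t)) 0 :=
        continuousAt_const.div (continuousAt_const.sub continuousAt_id) (by norm_num)
      have hone : Tendsto (fun t : ℝ => 1 / (1 - t)) (𝓝[>] 0) (𝓝 1) := by
        simpa using hcont.tendsto.mono_left nhdsWithin_le_nhds
      exact Eventually.and (Ioo_mem_nhdsGT one_pos) (hone.eventually (gt_mem_nhds ha))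
    obtain ⟨t, ⟨ht0, ht1⟩, hta⟩ := hsmall.exists
    obtain ⟨b, hb⟩ := hx t ht0
    have hbound : Tendsto (fun p : ℝ => (1 - p) ^ (-(t + b)) / (1 - t)) (𝓝[>] 0)
        (𝓝 (1 / (1 - t))) := by
      have hbase : Tendsto (fun p : ℝ => 1 - p) (𝓝 0) (𝓝 1) := by
        simpa using (continuous_sub_left (1 : ℝ)).tendsto 0
      simpa using ((hbase.rpow_const (Or.inl one_ne_zero)).div_const (1 - t)).mono_left
        nhdsWithin_le_nhds
    filter_upwards [Ioo_mem_nhdsGT one_pos, hbound.eventually (gt_mem_nhds hta)] with p hp hlt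
    exact (tsum_rpow_neg_geometric_le hp.1 hp.2 ht0.le ht1 hb).trans_lt hlt

theorem tendsto_tsum_rpow_geometric (hx0 : ∀ j, 0 ≤ x j)
    (hx : ∀ t > 0, ∃ b, ∀ j : ℕ, x j ≤ t * (j + 1) + b) :
    Tendsto (fun p : ℝ => ∑' j : ℕ, p * (1 - p) ^ j * (1 - p) ^ x j) (𝓝[>] 0) (𝓝 1) := by
  obtain ⟨b, hb⟩ := hx (1 / 2) (by norm_num)
  have hlower := (tendsto_tsum_rpow_neg_geometric hx0 hx).const_sub 2
  rw [show (2 : ℝ) - 1 = 1 by norm_num] at hlower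
  refine tendsto_of_tendsto_of_tendsto_of_le_of_le' hlower tendsto_const_nhds ?_ ?_
  · filter_upwards [Ioo_mem_nhdsGT one_pos] with p hp
    have := two_le_tsum_rpow_geometric_add_tsum_rpow_neg_geometric hp.1 hp.2 hx0
      (summable_rpow_neg_geometric hp.1 hp.2 (by norm_num) hb)
    linarith
  · filter_upwards [Ioo_mem_nhdsGT one_pos] with p hp
    exact tsum_rpow_geometric_le_one hp.1 hp.2 hx0

end Sublinear

/-- for `q_A` geometric with `P(q_A = k) = (2/A)(1-2/A)^{k-1}`
for `k ≥ 1`, one has `E[(1-2/A)^{√(2 q_A)}] → 1` and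
`E[(1-2/A)^{-√(2 q_A)}] → 1` as `A → ∞`; moreover the latter expectation is
finite (the defining series is summable) for every `A > 2`.  The expectations
are written as the sums over `k ≥ 1` (indexed by `k = j + 1`, `j : ℕ`), with
real-exponent powers. -/
theorem statement12 :
    Filter.Tendsto
      (fun A : ℝ => ∑' j : ℕ,
        (2 / A) * (1 - 2 / A) ^ j *
          (1 - 2 / A) ^ (Real.sqrt (2 * ((j : ℝ) + 1))))
      Filter.atTop (nhds 1) ∧
    Filter.Tendsto
      (fun A : ℝ => ∑' j : ℕ,
        (2 / A) * (1 - 2 / A) ^ j *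
          (1 - 2 / A) ^ (-Real.sqrt (2 * ((j : ℝ) + 1))))
      Filter.atTop (nhds 1) ∧
    ∀ A : ℝ, 2 < A →
      Summable (fun j : ℕ =>
        (2 / A) * (1 - 2 / A) ^ j *
          (1 - 2 / A) ^ (-Real.sqrt (2 * ((j : ℝ) + 1)))) := by
  have hx0 : ∀ j : ℕ, 0 ≤ √(2 * ((j : ℝ) + 1)) := fun j => Real.sqrt_nonneg _
  have hx : ∀ t > 0, ∃ b, ∀ j : ℕ, √(2 * ((j : ℝ) + 1)) ≤ t * (j + 1) + b :=
    fun t ht => ⟨1 / (2 * t), fun j => sqrt_two_mul_le_mul_add ht (by positivity)⟩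
  have hp : Tendsto (fun A : ℝ => 2 / A) atTop (𝓝[>] 0) :=
    tendsto_nhdsWithin_iff.2 ⟨tendsto_const_nhds.div_atTop tendsto_id,
      (eventually_gt_atTop 0).mono fun A hA => div_pos two_pos hA⟩
  refine ⟨(tendsto_tsum_rpow_geometric hx0 hx).comp hp,
    (tendsto_tsum_rpow_neg_geometric hx0 hx).comp hp, fun A hA => ?_⟩
  obtain ⟨b, hb⟩ := hx (1 / 2) (by norm_num)
  exact summable_rpow_neg_geometric (div_pos two_pos (by linarith))
    ((div_lt_one (by linarith)).2 hA) (by norm_num) hb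
end

section
/- Let u₁, u₂ : ℝ → ℝ be twice differentiable on [0, ∞), bounded on [0, ∞), satisfy u_i''(x) = 2x·u_i(x) for all x ≥ 0 (i = 1, 2), and u₁(0) = u₂(0). Then u₁(x) = u₂(x) for all x ≥ 0. -/
/-!
The difference `w = u₁ - u₂` solves `w'' = 2x w` with `w 0 = 0`, so `(w²)'' = 2 w'² + 4x w² ≥ 0`
on `[0, ∞)`: `w²` is convex there. A convex function that is bounded above on a half-line
`[a, ∞)` is nonincreasing on it (a positive secant slope would force linear growth), hence
`0 ≤ w x ^ 2 ≤ w 0 ^ 2 = 0`.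
-/

open Set

theorem ConvexOn.antitoneOn_Ici_of_bddAbove {𝕜 : Type*} [Field 𝕜] [LinearOrder 𝕜]
    [IsStrictOrderedRing 𝕜] {f : 𝕜 → 𝕜} {a : 𝕜} (hf : ConvexOn 𝕜 (Ici a) f)
    (hbdd : BddAbove (f '' Ici a)) : AntitoneOn f (Ici a) := by
  obtain ⟨M, hM⟩ := hbdd
  have hle : ∀ x ∈ Ici a, f x ≤ M := fun x hx => hM (mem_image_of_mem f hx)
  intro x hx y hy hxy
  rcases hxy.lt_or_eq with hxy | rfl
  · by_contra! hlt
    set s := (f y - f x) / (y - x)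
    have hs_pos : 0 < s := div_pos (sub_pos.2 hlt) (sub_pos.2 hxy)
    set z := y + (M - f y) / s + 1
    have hyz : y < z := by
      have : 0 ≤ (M - f y) / s := div_nonneg (sub_nonneg.2 (hle y hy)) hs_pos.le
      linarith
    have hz : z ∈ Ici a := le_trans hy hyz.le
    have hslope : s ≤ (f z - f y) / (z - y) := hf.slope_mono_adjacent hx hz hxy hyz
    rw [le_div_iff₀ (sub_pos.2 hyz)] at hslope
    have hgrowth : s * (z - y) = M - f y + s := by
      simp only [z]
      field_simp
      ring
    linarith [hle z hz]
  · exact le_rfl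

theorem convexOn_sq_of_hasDerivWithinAt_eq_mul {D : Set ℝ} (hD : Convex ℝ D) {w w' q : ℝ → ℝ}
    (hw : ∀ x ∈ D, HasDerivWithinAt w (w' x) D x)
    (hw' : ∀ x ∈ interior D, HasDerivWithinAt w' (q x * w x) D x)
    (hq : ∀ x ∈ interior D, 0 ≤ q x) : ConvexOn ℝ D (fun x => w x ^ 2) := by
  have hcont : ContinuousOn (fun x => w x ^ 2) D :=
    fun x hx => ((hw x hx).continuousWithinAt).pow 2
  refine convexOn_of_hasDerivWithinAt2_nonneg hD hcont (f' := fun x => 2 * w x * w' x)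
    (f'' := fun x => 2 * w' x ^ 2 + 2 * q x * w x ^ 2) ?_ ?_ ?_
  · intro x hx
    exact (((hw x (interior_subset hx)).mono interior_subset).fun_pow 2).congr_deriv (by ring)
  · intro x hx
    have hw_x := (hw x (interior_subset hx)).mono interior_subset
    exact ((hw_x.const_mul 2).fun_mul ((hw' x hx).mono interior_subset)).congr_deriv (by ring)
  · intro x hx
    have hqx := hq x hx
    positivity

theorem eq_zero_on_Ici_of_hasDerivWithinAt_eq_mul {w w' q : ℝ → ℝ} {a : ℝ}
    (hw : ∀ x ∈ Ici a, HasDerivWithinAt w (w' x) (Ici a) x)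
    (hw' : ∀ x ∈ Ioi a, HasDerivWithinAt w' (q x * w x) (Ici a) x)
    (hq : ∀ x ∈ Ioi a, 0 ≤ q x) (hbdd : ∃ C, ∀ x ∈ Ici a, |w x| ≤ C) (ha : w a = 0) :
    ∀ x ∈ Ici a, w x = 0 := by
  have hconv : ConvexOn ℝ (Ici a) (fun x => w x ^ 2) :=
    convexOn_sq_of_hasDerivWithinAt_eq_mul (convex_Ici a) hw (by rwa [interior_Ici])
      (by rwa [interior_Ici])
  obtain ⟨C, hC⟩ := hbdd
  have hsq_bdd : BddAbove ((fun x => w x ^ 2) '' Ici a) := by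
    refine ⟨C ^ 2, ?_⟩
    rintro _ ⟨x, hx, rfl⟩
    simpa only [sq_abs] using pow_le_pow_left₀ (abs_nonneg (w x)) (hC x hx) 2
  intro x hx
  have hx_le : w x ^ 2 ≤ w a ^ 2 :=
    hconv.antitoneOn_Ici_of_bddAbove hsq_bdd self_mem_Ici hx hx
  rw [ha, zero_pow two_ne_zero] at hx_le
  exact pow_eq_zero_iff two_ne_zero |>.1 (le_antisymm hx_le (sq_nonneg _))

/-- uniqueness of bounded solutions of `u'' = 2xu` on `[0,∞)`
with prescribed value at `0` (derivatives taken within `[0,∞)`, so one-sided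
at `0`). -/
theorem statement14 (u₁ u₂ u₁' u₂' : ℝ → ℝ)
    (hd₁ : ∀ x ∈ Set.Ici (0 : ℝ), HasDerivWithinAt u₁ (u₁' x) (Set.Ici 0) x)
    (hd₁' : ∀ x ∈ Set.Ici (0 : ℝ), HasDerivWithinAt u₁' (2 * x * u₁ x) (Set.Ici 0) x)
    (hb₁ : ∃ C : ℝ, ∀ x ∈ Set.Ici (0 : ℝ), |u₁ x| ≤ C)
    (hd₂ : ∀ x ∈ Set.Ici (0 : ℝ), HasDerivWithinAt u₂ (u₂' x) (Set.Ici 0) x)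
    (hd₂' : ∀ x ∈ Set.Ici (0 : ℝ), HasDerivWithinAt u₂' (2 * x * u₂ x) (Set.Ici 0) x)
    (hb₂ : ∃ C : ℝ, ∀ x ∈ Set.Ici (0 : ℝ), |u₂ x| ≤ C)
    (h0 : u₁ 0 = u₂ 0) :
    ∀ x ∈ Set.Ici (0 : ℝ), u₁ x = u₂ x := by
  obtain ⟨C₁, hC₁⟩ := hb₁
  obtain ⟨C₂, hC₂⟩ := hb₂
  have hw : ∀ x ∈ Ici (0 : ℝ), HasDerivWithinAt (u₁ - u₂) ((u₁' - u₂') x) (Ici 0) x :=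
    fun x hx => (hd₁ x hx).sub (hd₂ x hx)
  have hw' : ∀ x ∈ Ioi (0 : ℝ),
      HasDerivWithinAt (u₁' - u₂') (2 * x * (u₁ - u₂) x) (Ici 0) x := fun x hx =>
    ((hd₁' x (mem_Ici_of_Ioi hx)).sub (hd₂' x (mem_Ici_of_Ioi hx))).congr_deriv
      (mul_sub _ _ _).symm
  have hbdd : ∃ C, ∀ x ∈ Ici (0 : ℝ), |(u₁ - u₂) x| ≤ C :=
    ⟨C₁ + C₂, fun x hx => (abs_sub _ _).trans (add_le_add (hC₁ x hx) (hC₂ x hx))⟩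
  have hdiff := eq_zero_on_Ici_of_hasDerivWithinAt_eq_mul hw hw'
    (fun x hx => mul_nonneg zero_le_two (le_of_lt hx)) hbdd (sub_eq_zero.2 h0)
  exact fun x hx => sub_eq_zero.1 (hdiff x hx)
end

section
/- Let u : ℝ → ℝ be twice differentiable on [0, ∞), bounded on [0, ∞), with u''(x) = 2x·u(x) for all x ≥ 0 and u(0) = 1. Then u(x) > 0 and u'(x) < 0 for every x ≥ 0, u(x) → 0 as x → ∞, and u'(x) → 0 as x → ∞. -/
open Filter Set Topology

/-!
The product `g = u u'` satisfies `g' = u'² + 2x u² ≥ 0`. If `g` were ever positive, `(u²)' = 2g`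
would make `u²` unbounded, so `g ≤ 0`. A zero `c` of `u` then forces `g = 0` on `[c, ∞)`, hence
`u = u' = 0` on `(c, ∞)`, and uniqueness for the linear system `(u, u')' = (u', 2xu)` gives
`u(0) = 0`. So `u > 0`; then `u' ≤ 0` since `g ≤ 0`, and `u' < 0` because `u'' = 2xu > 0` makes
`u'` strictly increasing. Finally a positive lower bound for `u` would make `u'` grow linearly,
and a negative upper bound for `u'` would make `u` decrease linearly, so both tend to `0`.
-/

theorem tendsto_atTop_of_hasDerivAt_ge {f f' : ℝ → ℝ} {a c : ℝ} (hc : 0 < c)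
    (hf : ContinuousOn f (Ici a)) (hf' : ∀ x ∈ Ioi a, HasDerivAt f (f' x) x)
    (hcf' : ∀ x ∈ Ioi a, c ≤ f' x) : Tendsto f atTop atTop := by
  have hmono : MonotoneOn (fun x => f x - c * x) (Ici a) := by
    refine monotoneOn_of_hasDerivWithinAt_nonneg (f' := fun x => f' x - c * 1) (convex_Ici a)
      (hf.sub (continuousOn_const.mul continuousOn_id)) (fun x hx => ?_) (fun x hx => ?_)
    · rw [interior_Ici] at hx
      exact ((hf' x hx).sub ((hasDerivAt_id x).const_mul c)).hasDerivWithinAt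
    · rw [interior_Ici] at hx
      simpa using hcf' x hx
  have hlin : Tendsto (fun x => c * x + (f a - c * a)) atTop atTop :=
    tendsto_atTop_add_const_right _ _ (tendsto_id.const_mul_atTop hc)
  refine tendsto_atTop_mono' atTop ?_ hlin
  filter_upwards [eventually_ge_atTop a] with x hx
  have := hmono self_mem_Ici hx hx
  linarith

theorem tendsto_atTop_of_antitoneOn {α β : Type*} [Preorder α] [LinearOrder β]
    [TopologicalSpace β] [OrderTopology β] {f : α → β} {a : α} {l : β}
    (hf : AntitoneOn f (Ici a)) (hl : ∀ x ∈ Ici a, l ≤ f x) (h : ∀ b > l, ∃ x ∈ Ici a, f x < b) :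
    Tendsto f atTop (𝓝 l) := by
  refine tendsto_order.2 ⟨fun b hb => ?_, fun b hb => ?_⟩
  · filter_upwards [eventually_ge_atTop a] with x hx
    exact hb.trans_le (hl x hx)
  · obtain ⟨x₀, hx₀, hfx₀⟩ := h b hb
    filter_upwards [eventually_ge_atTop x₀] with x hx
    exact (hf hx₀ (mem_Ici.2 (le_trans hx₀ hx)) hx).trans_lt hfx₀

structure IsAirySolution (u u' : ℝ → ℝ) : Prop where
  hasDerivWithinAt : ∀ x ∈ Ici (0 : ℝ), HasDerivWithinAt u (u' x) (Ici 0) x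
  hasDerivWithinAt_deriv : ∀ x ∈ Ici (0 : ℝ), HasDerivWithinAt u' (2 * x * u x) (Ici 0) x

namespace IsAirySolution

variable {u u' : ℝ → ℝ}

theorem continuousOn (h : IsAirySolution u u') : ContinuousOn u (Ici 0) :=
  fun x hx => (h.hasDerivWithinAt x hx).continuousWithinAt

theorem continuousOn_deriv (h : IsAirySolution u u') : ContinuousOn u' (Ici 0) :=
  fun x hx => (h.hasDerivWithinAt_deriv x hx).continuousWithinAt

theorem hasDerivAt (h : IsAirySolution u u') {x : ℝ} (hx : 0 < x) : HasDerivAt u (u' x) x :=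
  (h.hasDerivWithinAt x hx.le).hasDerivAt (Ici_mem_nhds hx)

theorem hasDerivAt_deriv (h : IsAirySolution u u') {x : ℝ} (hx : 0 < x) :
    HasDerivAt u' (2 * x * u x) x :=
  (h.hasDerivWithinAt_deriv x hx.le).hasDerivAt (Ici_mem_nhds hx)

theorem hasDerivAt_mul (h : IsAirySolution u u') {x : ℝ} (hx : 0 < x) :
    HasDerivAt (fun y => u y * u' y) (u' x ^ 2 + 2 * x * u x ^ 2) x :=
  ((h.hasDerivAt hx).mul (h.hasDerivAt_deriv hx)).congr_deriv (by ring)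

theorem monotoneOn_mul (h : IsAirySolution u u') : MonotoneOn (fun x => u x * u' x) (Ici 0) := by
  refine monotoneOn_of_hasDerivWithinAt_nonneg (f' := fun x => u' x ^ 2 + 2 * x * u x ^ 2)
    (convex_Ici 0) (h.continuousOn.mul h.continuousOn_deriv) (fun x hx => ?_) (fun x hx => ?_)
  · rw [interior_Ici] at hx
    exact (h.hasDerivAt_mul hx).hasDerivWithinAt
  · rw [interior_Ici] at hx
    have : 0 < x := hx
    positivity

theorem mul_deriv_nonpos (h : IsAirySolution u u') (hb : ∃ C : ℝ, ∀ x ∈ Ici (0 : ℝ), |u x| ≤ C)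
    {x : ℝ} (hx : 0 ≤ x) : u x * u' x ≤ 0 := by
  obtain ⟨C, hC⟩ := hb
  by_contra! hpos
  have hsq : Tendsto (fun y => u y * u y) atTop atTop := by
    refine tendsto_atTop_of_hasDerivAt_ge (a := x) (c := 2 * (u x * u' x)) (by positivity)
      ((h.continuousOn.mul h.continuousOn).mono (Ici_subset_Ici.2 hx))
      (fun y hy => (h.hasDerivAt (hx.trans_lt hy)).mul (h.hasDerivAt (hx.trans_lt hy)))
      (fun y hy => ?_)
    have := h.monotoneOn_mul hx (hx.trans hy.le) hy.le
    simp only at this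
    linarith
  obtain ⟨y, hy, hy0⟩ := ((hsq.eventually_gt_atTop (C * C)).and (eventually_ge_atTop 0)).exists
  have hCy := hC y hy0
  nlinarith [abs_nonneg (u y), abs_mul_abs_self (u y)]

theorem eqOn_zero_of_eq_zero (h : IsAirySolution u u') {b : ℝ} (hu : u b = 0) (hu' : u' b = 0) :
    EqOn u 0 (Icc 0 b) := by
  have hlip : ∀ t ∈ Ioc 0 b, LipschitzOnWith (1 + 2 * ‖b‖₊)
      (fun p : ℝ × ℝ => (p.2, 2 * t * p.1)) univ := by
    intro t ht
    refine (LipschitzWith.of_dist_le_mul fun p q => ?_).lipschitzOnWith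
    have hb : |b| = b := abs_of_pos (ht.1.trans_le ht.2)
    have hmul : |2 * t * p.1 - 2 * t * q.1| = 2 * t * |p.1 - q.1| := by
      rw [← mul_sub, abs_mul, abs_of_pos (by linarith [ht.1])]
    simp only [Prod.dist_eq, Real.dist_eq, NNReal.coe_add, NNReal.coe_one, NNReal.coe_mul,
      NNReal.coe_ofNat, coe_nnnorm, Real.norm_eq_abs, hb, hmul]
    have h1 := le_max_left |p.1 - q.1| |p.2 - q.2|
    have h2 := le_max_right |p.1 - q.1| |p.2 - q.2|
    apply max_le <;> nlinarith [ht.1, ht.2, abs_nonneg (p.1 - q.1)]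
  have hpair := ODE_solution_unique_of_mem_Icc_left hlip
    ((h.continuousOn.mono Icc_subset_Ici_self).prodMk
      (h.continuousOn_deriv.mono Icc_subset_Ici_self))
    (fun t ht => ((h.hasDerivAt ht.1).prodMk (h.hasDerivAt_deriv ht.1)).hasDerivWithinAt)
    (fun _ _ => mem_univ _) (g := fun _ => 0) continuousOn_const
    (fun t _ => (hasDerivWithinAt_const t (Iic t) (0 : ℝ × ℝ)).congr_deriv (by ext <;> simp))
    (fun _ _ => mem_univ _) (by simp [hu, hu'])
  exact fun t ht => congrArg Prod.fst (hpair ht)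

theorem pos (h : IsAirySolution u u') (hb : ∃ C : ℝ, ∀ x ∈ Ici (0 : ℝ), |u x| ≤ C) (h0 : 0 < u 0)
    {x : ℝ} (hx : 0 ≤ x) : 0 < u x := by
  by_contra! hux
  obtain ⟨c, hc, huc⟩ : ∃ c ∈ Icc 0 x, u c = 0 :=
    intermediate_value_Icc' hx (h.continuousOn.mono Icc_subset_Ici_self) ⟨hux, h0.le⟩
  have hg : ∀ y ∈ Ici c, u y * u' y = 0 := fun y hy =>
    le_antisymm (h.mul_deriv_nonpos hb (hc.1.trans hy))
      (by simpa [huc] using h.monotoneOn_mul hc.1 (hc.1.trans hy) hy)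
  have hc1 : 0 < c + 1 := by linarith [hc.1]
  have hsum : u' (c + 1) ^ 2 + 2 * (c + 1) * u (c + 1) ^ 2 = 0 :=
    (h.hasDerivAt_mul hc1).unique <| (hasDerivAt_const (c + 1) (0 : ℝ)).congr_of_eventuallyEq <|
      eventually_of_mem (Ioi_mem_nhds (lt_add_one c)) fun y hy => hg y (mem_Ici.2 (le_of_lt hy))
  obtain ⟨hu'1, hu1⟩ := (add_eq_zero_iff_of_nonneg (sq_nonneg _) (by positivity)).1 hsum
  have hzero := h.eqOn_zero_of_eq_zero (b := c + 1) (by simpa [hc1.ne'] using hu1)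
    (pow_eq_zero_iff two_ne_zero |>.1 hu'1) ⟨le_rfl, hc1.le⟩
  exact h0.ne' hzero

theorem strictMonoOn_deriv (h : IsAirySolution u u') (hpos : ∀ x ∈ Ici (0 : ℝ), 0 < u x) :
    StrictMonoOn u' (Ici 0) := by
  refine strictMonoOn_of_hasDerivWithinAt_pos (f' := fun x => 2 * x * u x) (convex_Ici 0)
    h.continuousOn_deriv (fun x hx => ?_) (fun x hx => ?_)
  · rw [interior_Ici] at hx
    exact (h.hasDerivAt_deriv hx).hasDerivWithinAt
  · rw [interior_Ici] at hx
    have := hpos x (mem_Ici.2 (le_of_lt hx))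
    have : 0 < x := hx
    positivity

theorem deriv_neg (h : IsAirySolution u u') (hb : ∃ C : ℝ, ∀ x ∈ Ici (0 : ℝ), |u x| ≤ C)
    (h0 : 0 < u 0) {x : ℝ} (hx : 0 ≤ x) : u' x < 0 := by
  have hx1 : 0 ≤ x + 1 := by linarith
  have hlt : u' x < u' (x + 1) :=
    h.strictMonoOn_deriv (fun y hy => h.pos hb h0 hy) hx hx1 (lt_add_one x)
  have : u' (x + 1) ≤ 0 :=
    nonpos_of_mul_nonpos_right (h.mul_deriv_nonpos hb hx1) (h.pos hb h0 hx1)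
  linarith

theorem antitoneOn (h : IsAirySolution u u') (hneg : ∀ x ∈ Ici (0 : ℝ), u' x < 0) :
    AntitoneOn u (Ici 0) := by
  refine antitoneOn_of_hasDerivWithinAt_nonpos (f' := u') (convex_Ici 0) h.continuousOn
    (fun x hx => ?_) (fun x hx => ?_)
  · rw [interior_Ici] at hx
    exact (h.hasDerivAt hx).hasDerivWithinAt
  · rw [interior_Ici] at hx
    exact (hneg x (mem_Ici.2 (le_of_lt hx))).le

theorem tendsto_zero (h : IsAirySolution u u') (hpos : ∀ x ∈ Ici (0 : ℝ), 0 < u x)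
    (hneg : ∀ x ∈ Ici (0 : ℝ), u' x < 0) : Tendsto u atTop (𝓝 0) := by
  refine tendsto_atTop_of_antitoneOn (h.antitoneOn hneg) (fun x hx => (hpos x hx).le)
    fun ε hε => ?_
  by_contra! hε'
  have : Tendsto u' atTop atTop :=
    tendsto_atTop_of_hasDerivAt_ge (a := 1) (c := 2 * ε) (by positivity)
      (h.continuousOn_deriv.mono (Ici_subset_Ici.2 zero_le_one))
      (fun x hx => h.hasDerivAt_deriv (zero_lt_one.trans hx))
      (fun x hx => by nlinarith [hε' x (mem_Ici.2 (zero_le_one.trans (le_of_lt hx))), mem_Ioi.1 hx])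
  obtain ⟨x, hx, hx0⟩ := ((this.eventually_gt_atTop 0).and (eventually_ge_atTop 0)).exists
  exact (hneg x hx0).not_gt hx

theorem tendsto_deriv_zero (h : IsAirySolution u u') (hpos : ∀ x ∈ Ici (0 : ℝ), 0 < u x)
    (hneg : ∀ x ∈ Ici (0 : ℝ), u' x < 0) : Tendsto u' atTop (𝓝 0) := by
  have : Tendsto (fun x => -u' x) atTop (𝓝 0) := by
    refine tendsto_atTop_of_antitoneOn (h.strictMonoOn_deriv hpos).monotoneOn.neg
      (fun x hx => (neg_pos.2 (hneg x hx)).le) fun ε hε => ?_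
    by_contra! hε'
    have : Tendsto (fun x => -u x) atTop atTop :=
      tendsto_atTop_of_hasDerivAt_ge (a := 0) hε h.continuousOn.neg
        (fun x hx => (h.hasDerivAt hx).neg) (fun x hx => hε' x (mem_Ici.2 (le_of_lt hx)))
    obtain ⟨x, hx, hx0⟩ := ((this.eventually_gt_atTop 0).and (eventually_ge_atTop 0)).exists
    linarith [hpos x hx0]
  simpa using this.neg

end IsAirySolution

/-- the bounded solution of `u'' = 2xu` on `[0,∞)` with
`u(0) = 1` satisfies `u > 0` and `u' < 0` on `[0,∞)`, and `u(x) → 0`,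
`u'(x) → 0` as `x → ∞`. -/
theorem statement15 (u u' : ℝ → ℝ)
    (hd : ∀ x ∈ Set.Ici (0 : ℝ), HasDerivWithinAt u (u' x) (Set.Ici 0) x)
    (hd' : ∀ x ∈ Set.Ici (0 : ℝ), HasDerivWithinAt u' (2 * x * u x) (Set.Ici 0) x)
    (hb : ∃ C : ℝ, ∀ x ∈ Set.Ici (0 : ℝ), |u x| ≤ C)
    (h0 : u 0 = 1) :
    (∀ x ∈ Set.Ici (0 : ℝ), 0 < u x ∧ u' x < 0) ∧
      Filter.Tendsto u Filter.atTop (nhds 0) ∧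
      Filter.Tendsto u' Filter.atTop (nhds 0) := by
  have h : IsAirySolution u u' := ⟨hd, hd'⟩
  have hu0 : 0 < u 0 := h0 ▸ one_pos
  have hpos : ∀ x ∈ Set.Ici (0 : ℝ), 0 < u x := fun x hx => h.pos hb hu0 hx
  have hneg : ∀ x ∈ Set.Ici (0 : ℝ), u' x < 0 := fun x hx => h.deriv_neg hb hu0 hx
  exact ⟨fun x hx => ⟨hpos x hx, hneg x hx⟩, h.tendsto_zero hpos hneg,
    h.tendsto_deriv_zero hpos hneg⟩
end

section
/- Let u : ℝ → ℝ be twice differentiable on [0, ∞), bounded on [0, ∞), with u''(x) = 2x·u(x) for all x ≥ 0. Then y ↦ u(y)² is integrable on [0, ∞) and ∫_0^∞ u(y)² dy = u'(0)²/2. -/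
/-!
`g = u u'` has derivative `u'² + 2x u² ≥ 0`, and it is bounded above by `0`: otherwise `(u²)' = 2g`
would eventually stay above a positive constant and `u` could not be bounded. Hence `g` has a
limit, its derivative is integrable, and `u²`, `u'²` are antitone with `u'²` and (on `[1, ∞)`)
`u²` integrable, being dominated by `g'`. An antitone integrable function `f` satisfies `x f(x) → 0`, so
`F = x u² - u'²/2` tends to `0`; since `F' = u²` and `F(0) = -u'(0)²/2`, the improper
fundamental theorem of calculus gives the claim.
-/

open MeasureTheory Filter Set Topology

lemma monotoneOn_Ici_of_hasDerivWithinAt_nonneg {a : ℝ} {f f' : ℝ → ℝ}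
    (hf : ∀ x ∈ Ici a, HasDerivWithinAt f (f' x) (Ici a) x) (hf' : ∀ x ∈ Ioi a, 0 ≤ f' x) :
    MonotoneOn f (Ici a) :=
  monotoneOn_of_hasDerivWithinAt_nonneg (convex_Ici a) (fun x hx => (hf x hx).continuousWithinAt)
    (by rw [interior_Ici]; exact fun x hx => (hf x (mem_Ici_of_Ioi hx)).mono Ioi_subset_Ici_self)
    (by simpa only [interior_Ici] using hf')

lemma antitoneOn_Ici_of_hasDerivWithinAt_nonpos {a : ℝ} {f f' : ℝ → ℝ}
    (hf : ∀ x ∈ Ici a, HasDerivWithinAt f (f' x) (Ici a) x) (hf' : ∀ x ∈ Ioi a, f' x ≤ 0) :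
    AntitoneOn f (Ici a) :=
  antitoneOn_of_hasDerivWithinAt_nonpos (convex_Ici a) (fun x hx => (hf x hx).continuousWithinAt)
    (by rw [interior_Ici]; exact fun x hx => (hf x (mem_Ici_of_Ioi hx)).mono Ioi_subset_Ici_self)
    (by simpa only [interior_Ici] using hf')

lemma exists_tendsto_of_monotoneOn_Ici {a B : ℝ} {f : ℝ → ℝ} (hf : MonotoneOn f (Ici a))
    (hB : ∀ x ∈ Ici a, f x ≤ B) : ∃ l, Tendsto f atTop (𝓝 l) := by
  have hmono : Monotone fun x => f (max a x) := fun x y hxy =>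
    hf (le_max_left a x) (le_max_left a y) (max_le_max le_rfl hxy)
  refine ⟨_, (tendsto_atTop_ciSup hmono ⟨B, ?_⟩).congr' ?_⟩
  · rintro _ ⟨x, rfl⟩
    exact hB _ (le_max_left a x)
  · filter_upwards [eventually_ge_atTop a] with x hx
    rw [max_eq_right hx]

/-- Since `f` is antitone, `(x/2) f(x) ≤ ∫_{x/2}^x f`, and this tail integral tends to `0`. -/
lemma tendsto_mul_of_antitoneOn_of_integrableOn {a : ℝ} {f : ℝ → ℝ} (hf : AntitoneOn f (Ici a))
    (hf0 : ∀ x ∈ Ici a, 0 ≤ f x) (hint : IntegrableOn f (Ioi a)) :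
    Tendsto (fun x => x * f x) atTop (𝓝 0) := by
  have hii : ∀ b, a ≤ b → IntervalIntegrable f volume a b := fun b hb =>
    (intervalIntegrable_iff_integrableOn_Ioc_of_le hb).2 (hint.mono_set Ioc_subset_Ioi_self)
  have hφ : Tendsto (fun x => ∫ t in a..x, f t) atTop (𝓝 (∫ t in Ioi a, f t)) :=
    intervalIntegral_tendsto_integral_Ioi a hint tendsto_id
  have htail : Tendsto (fun x => 2 * ((∫ t in a..x, f t) - ∫ t in a..x / 2, f t)) atTop (𝓝 0) := by
    simpa using ((hφ.sub (hφ.comp (tendsto_id.atTop_div_const two_pos))).const_mul 2)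
  refine squeeze_zero' ?_ ?_ htail
  all_goals filter_upwards [eventually_ge_atTop 0, eventually_ge_atTop (2 * a)] with x hx hxa
  · exact mul_nonneg hx (hf0 x (by simp only [mem_Ici]; linarith))
  · have hx2 : a ≤ x / 2 := by linarith
    have hle : ∫ _ in x / 2..x, f x ≤ ∫ t in x / 2..x, f t :=
      intervalIntegral.integral_mono_on (by linarith) intervalIntegrable_const
        ((hii _ hx2).symm.trans (hii x (by linarith)))
        fun t ht => hf (hx2.trans ht.1) (by simp only [mem_Ici]; linarith) ht.2
    rw [intervalIntegral.integral_const, smul_eq_mul,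
      ← intervalIntegral.integral_interval_sub_left (hii x (by linarith)) (hii _ hx2)] at hle
    linarith

lemma tendsto_of_antitoneOn_of_integrableOn {a : ℝ} {f : ℝ → ℝ} (hf : AntitoneOn f (Ici a))
    (hf0 : ∀ x ∈ Ici a, 0 ≤ f x) (hint : IntegrableOn f (Ioi a)) :
    Tendsto f atTop (𝓝 0) := by
  have := tendsto_inv_atTop_zero.mul (tendsto_mul_of_antitoneOn_of_integrableOn hf hf0 hint)
  rw [zero_mul] at this
  refine this.congr' ?_
  filter_upwards [eventually_gt_atTop 0] with x hx
  field_simp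

section Airy

variable {u u' : ℝ → ℝ}

lemma hasDerivWithinAt_mul_deriv
    (hd : ∀ x ∈ Ici (0 : ℝ), HasDerivWithinAt u (u' x) (Ici 0) x)
    (hd' : ∀ x ∈ Ici (0 : ℝ), HasDerivWithinAt u' (2 * x * u x) (Ici 0) x) {x : ℝ} (hx : 0 ≤ x) :
    HasDerivWithinAt (fun y => u y * u' y) (u' x ^ 2 + 2 * x * u x ^ 2) (Ici 0) x :=
  ((hd x hx).mul (hd' x hx)).congr_deriv (by ring)

lemma hasDerivWithinAt_sq
    (hd : ∀ x ∈ Ici (0 : ℝ), HasDerivWithinAt u (u' x) (Ici 0) x) {x : ℝ} (hx : 0 ≤ x) :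
    HasDerivWithinAt (fun y => u y ^ 2) (2 * (u x * u' x)) (Ici 0) x :=
  ((hd x hx).fun_pow 2).congr_deriv (by push_cast; ring)

lemma mul_deriv_nonpos
    (hd : ∀ x ∈ Ici (0 : ℝ), HasDerivWithinAt u (u' x) (Ici 0) x)
    (hd' : ∀ x ∈ Ici (0 : ℝ), HasDerivWithinAt u' (2 * x * u x) (Ici 0) x)
    {C : ℝ} (hC : ∀ x ∈ Ici (0 : ℝ), |u x| ≤ C) {x₀ : ℝ} (hx₀ : 0 ≤ x₀) :
    u x₀ * u' x₀ ≤ 0 := by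
  by_contra! hc
  set c := u x₀ * u' x₀
  have hmono : MonotoneOn (fun y => u y * u' y) (Ici 0) :=
    monotoneOn_Ici_of_hasDerivWithinAt_nonneg (fun x hx => hasDerivWithinAt_mul_deriv hd hd' hx)
      fun x hx => by have : (0 : ℝ) ≤ x := le_of_lt hx; positivity
  have hgrow : MonotoneOn (fun y => u y ^ 2 - 2 * c * y) (Ici x₀) := by
    refine monotoneOn_Ici_of_hasDerivWithinAt_nonneg (f' := fun y => 2 * (u y * u' y) - 2 * c)
      (fun x hx => ?_) fun x hx => ?_
    · exact ((hasDerivWithinAt_sq hd (hx₀.trans hx)).mono fun y hy => hx₀.trans hy).sub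
        ((hasDerivWithinAt_id x _).const_mul (2 * c) |>.congr_deriv (mul_one _))
    · have := hmono hx₀ (hx₀.trans (le_of_lt hx)) (le_of_lt hx)
      simp only at this ⊢
      linarith
  set X := x₀ + (C ^ 2 + 1) / (2 * c)
  have hXx₀ : x₀ ≤ X := le_add_of_nonneg_right (by positivity)
  have hX : 2 * c * (X - x₀) = C ^ 2 + 1 := by simp only [X]; field_simp; ring
  have hgX := hgrow self_mem_Ici hXx₀ hXx₀
  have huX : u X ^ 2 ≤ C ^ 2 := by
    simpa only [sq_abs] using pow_le_pow_left₀ (abs_nonneg _) (hC X (hx₀.trans hXx₀)) 2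
  simp only at hgX
  nlinarith [sq_nonneg (u x₀)]

lemma integrableOn_deriv_sq_add_two_mul_sq
    (hd : ∀ x ∈ Ici (0 : ℝ), HasDerivWithinAt u (u' x) (Ici 0) x)
    (hd' : ∀ x ∈ Ici (0 : ℝ), HasDerivWithinAt u' (2 * x * u x) (Ici 0) x)
    {C : ℝ} (hC : ∀ x ∈ Ici (0 : ℝ), |u x| ≤ C) :
    IntegrableOn (fun x => u' x ^ 2 + 2 * x * u x ^ 2) (Ioi 0) := by
  have hg := fun x (hx : 0 ≤ x) => hasDerivWithinAt_mul_deriv hd hd' hx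
  have hnonneg : ∀ x ∈ Ioi (0 : ℝ), 0 ≤ u' x ^ 2 + 2 * x * u x ^ 2 := fun x hx => by
    have : (0 : ℝ) ≤ x := le_of_lt hx; positivity
  obtain ⟨l, hl⟩ := exists_tendsto_of_monotoneOn_Ici
    (monotoneOn_Ici_of_hasDerivWithinAt_nonneg hg hnonneg) fun x hx => mul_deriv_nonpos hd hd' hC hx
  exact integrableOn_Ioi_deriv_of_nonneg (hg 0 le_rfl).continuousWithinAt
    (fun x hx => (hg x (le_of_lt hx)).hasDerivAt (Ici_mem_nhds hx)) hnonneg hl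

lemma tendsto_mul_sq_sub_deriv_sq
    (hd : ∀ x ∈ Ici (0 : ℝ), HasDerivWithinAt u (u' x) (Ici 0) x)
    (hd' : ∀ x ∈ Ici (0 : ℝ), HasDerivWithinAt u' (2 * x * u x) (Ici 0) x)
    {C : ℝ} (hC : ∀ x ∈ Ici (0 : ℝ), |u x| ≤ C) :
    Tendsto (fun x => x * u x ^ 2 - u' x ^ 2 / 2) atTop (𝓝 0) := by
  have hint := integrableOn_deriv_sq_add_two_mul_sq hd hd' hC
  have hsq_anti : AntitoneOn (fun x => u x ^ 2) (Ici 0) :=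
    antitoneOn_Ici_of_hasDerivWithinAt_nonpos (fun x hx => hasDerivWithinAt_sq hd hx)
      fun x hx => by nlinarith [mul_deriv_nonpos hd hd' hC (le_of_lt hx)]
  have hderiv_sq_anti : AntitoneOn (fun x => u' x ^ 2) (Ici 0) :=
    antitoneOn_Ici_of_hasDerivWithinAt_nonpos (f' := fun x => 4 * x * (u x * u' x))
      (fun x hx => ((hd' x hx).fun_pow 2).congr_deriv (by push_cast; ring))
      fun x hx => by nlinarith [mul_deriv_nonpos hd hd' hC (le_of_lt hx), mem_Ioi.1 hx]
  have hcont : ContinuousOn u (Ici 0) := fun x hx => (hd x hx).continuousWithinAt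
  have hcont' : ContinuousOn u' (Ici 0) := fun x hx => (hd' x hx).continuousWithinAt
  have hsq_int : IntegrableOn (fun x => u x ^ 2) (Ioi 1) := by
    refine (hint.mono_set (Ioi_subset_Ioi zero_le_one)).mono'
      ((hcont.mono fun x (hx : 1 < x) => zero_le_one.trans hx.le).pow 2 |>.aestronglyMeasurable
        measurableSet_Ioi) (ae_restrict_of_forall_mem measurableSet_Ioi fun x (hx : 1 < x) => ?_)
    rw [Real.norm_of_nonneg (sq_nonneg _)]
    nlinarith [sq_nonneg (u' x), sq_nonneg (u x)]
  have hderiv_sq_int : IntegrableOn (fun x => u' x ^ 2) (Ioi 0) := by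
    refine hint.mono' ((hcont'.mono Ioi_subset_Ici_self).pow 2 |>.aestronglyMeasurable
        measurableSet_Ioi) (ae_restrict_of_forall_mem measurableSet_Ioi fun x (hx : 0 < x) => ?_)
    rw [Real.norm_of_nonneg (sq_nonneg _)]
    nlinarith [sq_nonneg (u x)]
  have h₁ := tendsto_mul_of_antitoneOn_of_integrableOn
    (hsq_anti.mono (Ici_subset_Ici.2 zero_le_one)) (fun x _ => sq_nonneg (u x)) hsq_int
  have h₂ := tendsto_of_antitoneOn_of_integrableOn hderiv_sq_anti (fun x _ => sq_nonneg (u' x))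
    hderiv_sq_int
  simpa using h₁.sub (h₂.div_const 2)

lemma hasDerivWithinAt_mul_sq_sub_deriv_sq
    (hd : ∀ x ∈ Ici (0 : ℝ), HasDerivWithinAt u (u' x) (Ici 0) x)
    (hd' : ∀ x ∈ Ici (0 : ℝ), HasDerivWithinAt u' (2 * x * u x) (Ici 0) x) {x : ℝ} (hx : 0 ≤ x) :
    HasDerivWithinAt (fun y => y * u y ^ 2 - u' y ^ 2 / 2) (u x ^ 2) (Ici 0) x :=
  (((hasDerivWithinAt_id x _).mul (hasDerivWithinAt_sq hd hx)).sub
    (((hd' x hx).fun_pow 2).div_const 2)).congr_deriv (by simp only [id]; push_cast; ring)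

end Airy

/-- for a bounded solution of `u'' = 2xu` on `[0,∞)`,
`y ↦ u(y)²` is integrable on `[0,∞)` and `∫_0^∞ u(y)² dy = u'(0)²/2`. -/
theorem statement16 (u u' : ℝ → ℝ)
    (hd : ∀ x ∈ Set.Ici (0 : ℝ), HasDerivWithinAt u (u' x) (Set.Ici 0) x)
    (hd' : ∀ x ∈ Set.Ici (0 : ℝ), HasDerivWithinAt u' (2 * x * u x) (Set.Ici 0) x)
    (hb : ∃ C : ℝ, ∀ x ∈ Set.Ici (0 : ℝ), |u x| ≤ C) :
    MeasureTheory.IntegrableOn (fun y => u y ^ 2) (Set.Ici 0) MeasureTheory.volume ∧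
      ∫ y in Set.Ici (0 : ℝ), u y ^ 2 = u' 0 ^ 2 / 2 := by
  obtain ⟨C, hC⟩ := hb
  have hF := fun x (hx : 0 ≤ x) => hasDerivWithinAt_mul_sq_sub_deriv_sq hd hd' hx
  have hcont := (hF 0 le_rfl).continuousWithinAt
  have hderiv := fun x (hx : 0 < x) => (hF x (le_of_lt hx)).hasDerivAt (Ici_mem_nhds hx)
  have hlim := tendsto_mul_sq_sub_deriv_sq hd hd' hC
  have hint := integrableOn_Ioi_deriv_of_nonneg hcont hderiv (fun x _ => sq_nonneg (u x)) hlim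
  refine ⟨by rwa [integrableOn_Ici_iff_integrableOn_Ioi], ?_⟩
  rw [integral_Ici_eq_integral_Ioi,
    integral_Ioi_of_hasDerivAt_of_nonneg hcont hderiv (fun x _ => sq_nonneg (u x)) hlim]
  ring
end

section
/- Let u : ℝ → ℝ be twice differentiable on [0, ∞), bounded on [0, ∞), with u''(x) = 2x·u(x) for all x ≥ 0 and u(0) = 1. Then 2∫_0^∞ (u'(0)·u(h)² - u'(h)·u(h)) dh = u'(0)³ + 1. -/
/-!
Convexity does most of the work. Since `(u²)'' = 2 u'² + 4 x u² ≥ 0`, the bounded function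
`u²` is convex, hence antitone on `[0, ∞)`, which forces `u ≥ 0`; then `u'' = 2 x u ≥ 0` makes
`u` convex and antitone too, so `u' ≤ 0`. For `x ≥ 1`, `w = u + u'` satisfies `w' ≥ w` and is
bounded above, so `w ≤ 0` and `u` decays like `exp (-x)`; hence `u`, `u'` and `x u²` tend
to `0`.
The identity follows from the antiderivatives `x u² - u'² / 2` of `u²` and `u² / 2` of `u' u`,
which give `∫ u² = u'(0)² / 2` and `∫ u' u = -u(0)² / 2`.
-/

open MeasureTheory Filter Set Real Topology

theorem exists_lt_of_add_mul_sub_le {f : ℝ → ℝ} {b s : ℝ} (hs : 0 < s)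
    (h : ∀ x ∈ Ici b, f b + s * (x - b) ≤ f x) (M : ℝ) : ∃ x ∈ Ici b, M < f x := by
  have hx : b ≤ b + (|M - f b| + 1) / s := le_add_of_nonneg_right (by positivity)
  refine ⟨_, hx, ?_⟩
  have := h _ hx
  rw [add_sub_cancel_left, mul_div_cancel₀ _ hs.ne'] at this
  linarith [le_abs_self (M - f b)]

/-- An increasing secant would force at least linear growth. -/
theorem ConvexOn.antitoneOn_Ici_of_le {f : ℝ → ℝ} {a M : ℝ} (hf : ConvexOn ℝ (Ici a) f)
    (hM : ∀ x ∈ Ici a, f x ≤ M) : AntitoneOn f (Ici a) := by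
  intro x hx y hy hxy
  by_contra! hlt
  have hxy' : x < y := hxy.lt_of_ne (by rintro rfl; exact lt_irrefl _ hlt)
  have hs : 0 < (f y - f x) / (y - x) := div_pos (sub_pos.2 hlt) (sub_pos.2 hxy')
  obtain ⟨z, hz, hMz⟩ := exists_lt_of_add_mul_sub_le hs (fun z (hz : y ≤ z) => by
    rcases hz.eq_or_lt with rfl | hyz
    · simp
    have := hf.slope_mono_adjacent hx (hy.out.trans hz : a ≤ z) hxy' hyz
    rw [le_div_iff₀ (sub_pos.2 hyz)] at this
    exact le_sub_iff_add_le'.mp this) M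
  exact (hM z (hy.out.trans hz)).not_gt hMz

theorem ConvexOn.hasDerivAt_nonpos_of_le {f : ℝ → ℝ} {a M f' x : ℝ}
    (hf : ConvexOn ℝ (Ici a) f) (hM : ∀ x ∈ Ici a, f x ≤ M) (hx : x ∈ Ici a)
    (hf' : HasDerivAt f f' x) : f' ≤ 0 := by
  have hx1 : x + 1 ∈ Ici a := hx.out.trans (le_add_of_nonneg_right zero_le_one)
  calc f' ≤ slope f x (x + 1) := hf.le_slope_of_hasDerivAt hx hx1 (lt_add_one x) hf'
    _ ≤ 0 := by
      rw [slope_def_field, add_sub_cancel_left, div_one, sub_nonpos]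
      exact hf.antitoneOn_Ici_of_le hM hx hx1 (le_add_of_nonneg_right zero_le_one)

/-- Once positive, `f` grows like `exp`, since `exp (-x) * f x` is monotone. -/
theorem nonpos_of_le_deriv_of_le {f f' : ℝ → ℝ} {a M : ℝ} (hc : ContinuousOn f (Ici a))
    (hf : ∀ x ∈ Ioi a, HasDerivAt f (f' x) x) (hle : ∀ x ∈ Ioi a, f x ≤ f' x)
    (hM : ∀ x ∈ Ici a, f x ≤ M) : ∀ x ∈ Ici a, f x ≤ 0 := by
  have hmono : MonotoneOn (fun x => exp (-x) * f x) (Ici a) := by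
    refine monotoneOn_of_hasDerivWithinAt_nonneg (f' := fun x => exp (-x) * (f' x - f x))
      (convex_Ici a) ((continuous_exp.comp continuous_neg).continuousOn.mul hc) ?_ ?_
    all_goals rw [interior_Ici]
    · intro x hx
      exact (((hasDerivAt_neg x).exp.mul (hf x hx)).congr_deriv (by ring)).hasDerivWithinAt
    · intro x hx
      exact mul_nonneg (exp_pos _).le (sub_nonneg.2 (hle x hx))
  intro b hb
  by_contra! hpos
  obtain ⟨x, hx, hMx⟩ := exists_lt_of_add_mul_sub_le hpos (fun x (hbx : b ≤ x) => by
    have hgrowth := hmono hb (hb.out.trans hbx) hbx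
    have hexp : exp (-x) * exp (x - b) = exp (-b) := by rw [← exp_add]; ring_nf
    calc f b + f b * (x - b) = f b * (x - b + 1) := by ring
      _ ≤ f b * exp (x - b) := mul_le_mul_of_nonneg_left (add_one_le_exp _) hpos.le
      _ ≤ f x := by
        rw [← mul_le_mul_iff_of_pos_left (exp_pos (-x)), ← mul_assoc, mul_comm _ (f b),
          mul_assoc, hexp]
        linarith) M
  exact (hM x (hb.out.trans hx)).not_gt hMx

/-- `u'' = 2 x u` on `[0, ∞)` (Airy's equation after rescaling `x`), with `u'` the derivative of
`u`; derivatives are only required on `(0, ∞)`, together with continuity at `0`. -/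
structure IsAirySolution_s17 (u u' : ℝ → ℝ) : Prop where
  continuousOn : ContinuousOn u (Ici 0)
  continuousOn_deriv : ContinuousOn u' (Ici 0)
  hasDerivAt : ∀ x ∈ Ioi 0, HasDerivAt u (u' x) x
  hasDerivAt_deriv : ∀ x ∈ Ioi 0, HasDerivAt u' (2 * x * u x) x

noncomputable def airyEnergy (u u' : ℝ → ℝ) (x : ℝ) : ℝ := x * u x ^ 2 - u' x ^ 2 / 2

namespace IsAirySolution_s17

variable {u u' : ℝ → ℝ} {C : ℝ}

theorem of_hasDerivWithinAt (hd : ∀ x ∈ Ici (0 : ℝ), HasDerivWithinAt u (u' x) (Ici 0) x)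
    (hd' : ∀ x ∈ Ici (0 : ℝ), HasDerivWithinAt u' (2 * x * u x) (Ici 0) x) :
    IsAirySolution_s17 u u' where
  continuousOn x hx := (hd x hx).continuousWithinAt
  continuousOn_deriv x hx := (hd' x hx).continuousWithinAt
  hasDerivAt x hx := (hd x hx.out.le).hasDerivAt (Ici_mem_nhds hx)
  hasDerivAt_deriv x hx := (hd' x hx.out.le).hasDerivAt (Ici_mem_nhds hx)

theorem hasDerivAt_sq (hs : IsAirySolution_s17 u u') {x : ℝ} (hx : x ∈ Ioi 0) :
    HasDerivAt (fun y => u y ^ 2) (2 * (u x * u' x)) x :=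
  ((hs.hasDerivAt x hx).pow 2).congr_deriv (by ring)

theorem convexOn_sq (hs : IsAirySolution_s17 u u') : ConvexOn ℝ (Ici 0) (fun x => u x ^ 2) := by
  refine convexOn_of_hasDerivWithinAt2_nonneg (convex_Ici 0) (hs.continuousOn.pow 2)
    (f' := fun x => 2 * (u x * u' x)) (f'' := fun x => 2 * (u' x ^ 2 + 2 * x * u x ^ 2)) ?_ ?_ ?_
  all_goals rw [interior_Ici]
  · exact fun x hx => (hs.hasDerivAt_sq hx).hasDerivWithinAt
  · intro x hx
    exact ((((hs.hasDerivAt x hx).mul (hs.hasDerivAt_deriv x hx)).const_mul 2).congr_deriv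
      (by ring)).hasDerivWithinAt
  · intro x (hx : 0 < x)
    positivity

theorem nonneg (hs : IsAirySolution_s17 u u') (hC : ∀ x ∈ Ici 0, |u x| ≤ C) (h0 : 0 ≤ u 0)
    {x : ℝ} (hx : x ∈ Ici 0) : 0 ≤ u x := by
  by_contra! hneg
  obtain ⟨c, hc, hc0⟩ : ∃ c ∈ Icc 0 x, u c = 0 :=
    intermediate_value_Icc' hx.out (hs.continuousOn.mono Icc_subset_Ici_self) ⟨hneg.le, h0⟩
  have hanti := hs.convexOn_sq.antitoneOn_Ici_of_le (M := C ^ 2)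
    (fun y hy => sq_le_sq' (abs_le.1 (hC y hy)).1 (abs_le.1 (hC y hy)).2) hc.1 hx hc.2
  simp only [hc0] at hanti
  nlinarith

theorem convexOn (hs : IsAirySolution_s17 u u') (hC : ∀ x ∈ Ici 0, |u x| ≤ C) (h0 : 0 ≤ u 0) :
    ConvexOn ℝ (Ici 0) u := by
  refine convexOn_of_hasDerivWithinAt2_nonneg (convex_Ici 0) hs.continuousOn
    (f' := u') (f'' := fun x => 2 * x * u x) ?_ ?_ ?_
  all_goals rw [interior_Ici]
  · exact fun x hx => (hs.hasDerivAt x hx).hasDerivWithinAt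
  · exact fun x hx => (hs.hasDerivAt_deriv x hx).hasDerivWithinAt
  · intro x (hx : 0 < x)
    have := hs.nonneg hC h0 hx.le
    positivity

theorem deriv_nonpos (hs : IsAirySolution_s17 u u') (hC : ∀ x ∈ Ici 0, |u x| ≤ C) (h0 : 0 ≤ u 0)
    {x : ℝ} (hx : x ∈ Ioi 0) : u' x ≤ 0 :=
  (hs.convexOn hC h0).hasDerivAt_nonpos_of_le (fun y hy => (le_abs_self _).trans (hC y hy))
    hx.out.le (hs.hasDerivAt x hx)

theorem add_deriv_nonpos (hs : IsAirySolution_s17 u u') (hC : ∀ x ∈ Ici 0, |u x| ≤ C)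
    (h0 : 0 ≤ u 0) : ∀ x ∈ Ici 1, u x + u' x ≤ 0 := by
  have hpos {x : ℝ} (hx : x ∈ Ioi 1) : x ∈ Ioi 0 := lt_trans one_pos hx
  refine nonpos_of_le_deriv_of_le (f' := fun x => u' x + 2 * x * u x) (M := C)
    ((hs.continuousOn.add hs.continuousOn_deriv).mono (Ici_subset_Ici.2 zero_le_one))
    (fun x hx => (hs.hasDerivAt x (hpos hx)).add (hs.hasDerivAt_deriv x (hpos hx))) ?_ ?_
  · intro x (hx : 1 < x)
    have := hs.nonneg hC h0 (hpos hx).out.le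
    nlinarith
  · intro x (hx : 1 ≤ x)
    linarith [(le_abs_self _).trans (hC x (zero_le_one.trans hx)),
      hs.deriv_nonpos hC h0 (zero_lt_one.trans_le hx)]

theorem le_mul_exp (hs : IsAirySolution_s17 u u') (hC : ∀ x ∈ Ici 0, |u x| ≤ C) (h0 : 0 ≤ u 0)
    {x : ℝ} (hx : x ∈ Ici 1) : u x ≤ u 1 * exp (1 - x) := by
  have hanti : AntitoneOn (fun x => u x * exp x) (Ici 1) := by
    refine antitoneOn_of_hasDerivWithinAt_nonpos (f' := fun x => (u x + u' x) * exp x)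
      (convex_Ici 1) ((hs.continuousOn.mono (Ici_subset_Ici.2 zero_le_one)).mul
        continuous_exp.continuousOn) ?_ ?_
    all_goals rw [interior_Ici]
    · intro x (hx : 1 < x)
      exact (((hs.hasDerivAt x (zero_lt_one.trans hx)).mul (hasDerivAt_exp x)).congr_deriv
        (by ring)).hasDerivWithinAt
    · intro x (hx : 1 < x)
      exact mul_nonpos_of_nonpos_of_nonneg (hs.add_deriv_nonpos hC h0 x hx.le) (exp_pos x).le
  have := hanti self_mem_Ici hx hx
  rwa [exp_sub, mul_div_assoc', le_div_iff₀ (exp_pos x)]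

theorem tendsto_id_mul (hs : IsAirySolution_s17 u u') (hC : ∀ x ∈ Ici 0, |u x| ≤ C)
    (h0 : 0 ≤ u 0) : Tendsto (fun x => x * u x) atTop (𝓝 0) := by
  have hlim : Tendsto (fun x => u 1 * exp 1 * (x * exp (-x))) atTop (𝓝 0) := by
    simpa using (tendsto_pow_mul_exp_neg_atTop_nhds_zero 1).const_mul (u 1 * exp 1)
  refine tendsto_of_tendsto_of_tendsto_of_le_of_le' tendsto_const_nhds hlim ?_ ?_
  all_goals filter_upwards [eventually_ge_atTop 1] with x hx
  · exact mul_nonneg (zero_le_one.trans hx) (hs.nonneg hC h0 (zero_le_one.trans hx))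
  · calc x * u x ≤ x * (u 1 * exp (1 - x)) :=
          mul_le_mul_of_nonneg_left (hs.le_mul_exp hC h0 hx) (zero_le_one.trans hx)
      _ = u 1 * exp 1 * (x * exp (-x)) := by rw [sub_eq_add_neg, exp_add]; ring

theorem tendsto (hs : IsAirySolution_s17 u u') (hC : ∀ x ∈ Ici 0, |u x| ≤ C) (h0 : 0 ≤ u 0) :
    Tendsto u atTop (𝓝 0) := by
  refine tendsto_of_tendsto_of_tendsto_of_le_of_le' tendsto_const_nhds
    (hs.tendsto_id_mul hC h0) ?_ ?_
  all_goals filter_upwards [eventually_ge_atTop 1] with x hx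
  · exact hs.nonneg hC h0 (zero_le_one.trans hx)
  · exact le_mul_of_one_le_left (hs.nonneg hC h0 (zero_le_one.trans hx)) hx

/-- By convexity, `u x - u (x - 1) ≤ u' x ≤ 0`. -/
theorem tendsto_deriv (hs : IsAirySolution_s17 u u') (hC : ∀ x ∈ Ici 0, |u x| ≤ C)
    (h0 : 0 ≤ u 0) : Tendsto u' atTop (𝓝 0) := by
  have hlim : Tendsto (fun x => u x - u (x - 1)) atTop (𝓝 0) := by
    simpa [sub_eq_add_neg] using
      (hs.tendsto hC h0).sub
        ((hs.tendsto hC h0).comp (tendsto_atTop_add_const_right _ (-1) tendsto_id))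
  refine tendsto_of_tendsto_of_tendsto_of_le_of_le' hlim tendsto_const_nhds ?_ ?_
  all_goals filter_upwards [eventually_ge_atTop 1] with x hx
  · have := (hs.convexOn hC h0).slope_le_of_hasDerivAt (sub_nonneg.2 hx : 0 ≤ x - 1)
      (zero_le_one.trans hx : 0 ≤ x) (sub_one_lt x) (hs.hasDerivAt x (zero_lt_one.trans_le hx))
    rwa [slope_def_field, sub_sub_cancel, div_one] at this
  · exact hs.deriv_nonpos hC h0 (zero_lt_one.trans_le hx)

theorem hasDerivAt_airyEnergy (hs : IsAirySolution_s17 u u') {x : ℝ} (hx : x ∈ Ioi 0) :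
    HasDerivAt (airyEnergy u u') (u x ^ 2) x :=
  (((hasDerivAt_id x).mul (hs.hasDerivAt_sq hx)).sub
    (((hs.hasDerivAt_deriv x hx).pow 2).div_const 2)).congr_deriv
    (by simp only [id_eq, one_mul, Nat.cast_ofNat, Nat.add_one_sub_one, pow_one]; ring)

theorem continuousWithinAt_airyEnergy (hs : IsAirySolution_s17 u u') :
    ContinuousWithinAt (airyEnergy u u') (Ici 0) 0 :=
  (continuousWithinAt_id.mul ((hs.continuousOn 0 self_mem_Ici).pow 2)).sub
    (((hs.continuousOn_deriv 0 self_mem_Ici).pow 2).div_const 2)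

theorem tendsto_airyEnergy (hs : IsAirySolution_s17 u u') (hC : ∀ x ∈ Ici 0, |u x| ≤ C)
    (h0 : 0 ≤ u 0) : Tendsto (airyEnergy u u') atTop (𝓝 0) := by
  have hlim := ((hs.tendsto_id_mul hC h0).mul (hs.tendsto hC h0)).sub
    (((hs.tendsto_deriv hC h0).pow 2).div_const 2)
  rw [mul_zero, zero_pow two_ne_zero, zero_div, sub_zero] at hlim
  exact hlim.congr fun x => by rw [airyEnergy]; ring

theorem integrableOn_sq (hs : IsAirySolution_s17 u u') (hC : ∀ x ∈ Ici 0, |u x| ≤ C)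
    (h0 : 0 ≤ u 0) : IntegrableOn (fun x => u x ^ 2) (Ioi 0) :=
  integrableOn_Ioi_deriv_of_nonneg hs.continuousWithinAt_airyEnergy
    (fun _ => hs.hasDerivAt_airyEnergy) (fun x _ => sq_nonneg (u x)) (hs.tendsto_airyEnergy hC h0)

theorem integral_sq (hs : IsAirySolution_s17 u u') (hC : ∀ x ∈ Ici 0, |u x| ≤ C)
    (h0 : 0 ≤ u 0) : ∫ x in Ioi 0, u x ^ 2 = u' 0 ^ 2 / 2 := by
  rw [integral_Ioi_of_hasDerivAt_of_nonneg hs.continuousWithinAt_airyEnergy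
    (fun _ => hs.hasDerivAt_airyEnergy) (fun x _ => sq_nonneg (u x)) (hs.tendsto_airyEnergy hC h0),
    airyEnergy]
  ring

theorem hasDerivAt_half_sq (hs : IsAirySolution_s17 u u') {x : ℝ} (hx : x ∈ Ioi 0) :
    HasDerivAt (fun y => u y ^ 2 / 2) (u' x * u x) x :=
  ((hs.hasDerivAt_sq hx).div_const 2).congr_deriv (by ring)

theorem deriv_mul_nonpos (hs : IsAirySolution_s17 u u') (hC : ∀ x ∈ Ici 0, |u x| ≤ C)
    (h0 : 0 ≤ u 0) {x : ℝ} (hx : x ∈ Ioi 0) : u' x * u x ≤ 0 :=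
  mul_nonpos_of_nonpos_of_nonneg (hs.deriv_nonpos hC h0 hx) (hs.nonneg hC h0 hx.out.le)

theorem tendsto_half_sq (hs : IsAirySolution_s17 u u') (hC : ∀ x ∈ Ici 0, |u x| ≤ C)
    (h0 : 0 ≤ u 0) : Tendsto (fun y => u y ^ 2 / 2) atTop (𝓝 0) := by
  simpa using ((hs.tendsto hC h0).pow 2).div_const 2

theorem integrableOn_deriv_mul (hs : IsAirySolution_s17 u u') (hC : ∀ x ∈ Ici 0, |u x| ≤ C)
    (h0 : 0 ≤ u 0) : IntegrableOn (fun x => u' x * u x) (Ioi 0) :=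
  integrableOn_Ioi_deriv_of_nonpos (((hs.continuousOn 0 self_mem_Ici).pow 2).div_const 2)
    (fun _ => hs.hasDerivAt_half_sq) (fun _ => hs.deriv_mul_nonpos hC h0)
    (hs.tendsto_half_sq hC h0)

theorem integral_deriv_mul (hs : IsAirySolution_s17 u u') (hC : ∀ x ∈ Ici 0, |u x| ≤ C)
    (h0 : 0 ≤ u 0) : ∫ x in Ioi 0, u' x * u x = -(u 0 ^ 2 / 2) := by
  rw [integral_Ioi_of_hasDerivAt_of_nonpos (((hs.continuousOn 0 self_mem_Ici).pow 2).div_const 2)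
    (fun _ => hs.hasDerivAt_half_sq) (fun _ => hs.deriv_mul_nonpos hC h0)
    (hs.tendsto_half_sq hC h0), zero_sub, Pi.pow_apply]

end IsAirySolution_s17

/-- for the bounded solution of `u'' = 2xu` on `[0,∞)` with
`u(0) = 1`, one has `2 ∫_0^∞ (u'(0) u(h)² - u'(h) u(h)) dh = u'(0)³ + 1`. -/
theorem statement17 (u u' : ℝ → ℝ)
    (hd : ∀ x ∈ Set.Ici (0 : ℝ), HasDerivWithinAt u (u' x) (Set.Ici 0) x)
    (hd' : ∀ x ∈ Set.Ici (0 : ℝ), HasDerivWithinAt u' (2 * x * u x) (Set.Ici 0) x)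
    (hb : ∃ C : ℝ, ∀ x ∈ Set.Ici (0 : ℝ), |u x| ≤ C)
    (h0 : u 0 = 1) :
    2 * ∫ h in Set.Ici (0 : ℝ), (u' 0 * u h ^ 2 - u' h * u h) = u' 0 ^ 3 + 1 := by
  obtain ⟨C, hC⟩ := hb
  have hs := IsAirySolution_s17.of_hasDerivWithinAt hd hd'
  have hu0 : 0 ≤ u 0 := h0 ▸ zero_le_one
  rw [integral_Ici_eq_integral_Ioi,
    integral_sub ((hs.integrableOn_sq hC hu0).const_mul _) (hs.integrableOn_deriv_mul hC hu0),
    integral_const_mul, hs.integral_sq hC hu0, hs.integral_deriv_mul hC hu0, h0]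
  ring
end
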